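/- arXiv:1407.7177 — 9 statements merged into one kernel-verified Lean document; each statement's English description precedes it below -/
import Mathlib

section
/- Let G be a tree (connected acyclic simple graph) with graph distance δ. For a subtree S and r ≥ 0, define S^[r] as the set of vertices at distance at most r from S. If S₁ and S₂ are subtrees (connected subgraphs) of G with nonempty intersection, then (S₁ ∩ S₂)^[r] = S₁^[r] ∩ S₂^[r] for every natural number r. -/
/-! Fix `z ∈ S₁ ∩ S₂` and let `P` be the path from `x` to `z`. In a tree, `P` meets every walk
from `y` to `z` within distance `dist x y` of `x`; for a walk inside a subtree `S ∋ y, z` this puts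
a vertex of `S` on `P` within distance `dist x y` of `x`. Subtrees are convex, so the vertices of
`P` in `S` form a final segment of `P`. Two final segments are nested, so the later of the
vertices found for `S₁` and `S₂` lies in `S₁ ∩ S₂`, still within distance `r` of `x`. -/

namespace SimpleGraph

open Walk

variable {V : Type*} {G : SimpleGraph V}

lemma Preconnected.exists_walk_support_subset {S : Set V} (hS : (G.induce S).Preconnected)
    {a b : V} (ha : a ∈ S) (hb : b ∈ S) : ∃ w : G.Walk a b, ∀ v ∈ w.support, v ∈ S := by
  obtain ⟨w⟩ := hS ⟨a, ha⟩ ⟨b, hb⟩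
  refine ⟨w.map (Embedding.induce S).toHom, fun v hv => ?_⟩
  obtain ⟨u, -, rfl⟩ := List.mem_map.mp (Walk.support_map _ w ▸ hv)
  exact u.2

lemma IsAcyclic.support_subset_of_isPath (hG : G.IsAcyclic) {S : Set V}
    (hS : (G.induce S).Preconnected) {a b : V} (ha : a ∈ S) (hb : b ∈ S) {p : G.Walk a b}
    (hp : p.IsPath) : ∀ v ∈ p.support, v ∈ S := by
  classical
  obtain ⟨w, hw⟩ := hS.exists_walk_support_subset ha hb
  rw [Subtype.mk.inj <| (hG.subsingleton_path a b).elim ⟨p, hp⟩ ⟨w.bypass, w.bypass_isPath⟩]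
  exact fun v hv => hw v (w.support_bypass_subset_support hv)

lemma IsAcyclic.dist_lt_of_adj_of_notMem_support (hG : G.IsAcyclic) {x x' y : V}
    (hadj : G.Adj x x') (w : G.Walk y x') (hx : x ∉ w.support) : G.dist y x' < G.dist y x := by
  classical
  rcases hG.dist_eq_dist_add_one_of_adj_of_reachable y hadj.symm w.reachable with h | h
  · -- A geodesic to `x` followed by the edge to `x'` would then be the path to `x'`,
    -- but the path `w.bypass` to `x'` avoids `x`.
    obtain ⟨q, -, hq⟩ := (w.reachable.trans hadj.symm.reachable).exists_path_of_dist
    have hqx : (q.concat hadj).IsPath :=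
      (q.concat hadj).isPath_of_length_eq_dist (by rw [length_concat, hq, h])
    have heq := Subtype.mk.inj <|
      (hG.subsingleton_path y x').elim ⟨w.bypass, w.bypass_isPath⟩ ⟨_, hqx⟩
    refine absurd (w.support_bypass_subset_support ?_) hx
    simp [heq]
  · omega

lemma IsAcyclic.exists_getVert_mem_support_le_dist (hG : G.IsAcyclic) {y z : V}
    (R : G.Walk y z) {x : V} (P : G.Walk x z) (hP : P.IsPath) :
    ∃ i ≤ G.dist x y, P.getVert i ∈ R.support := by
  induction P with
  | nil => exact ⟨0, Nat.zero_le _, R.end_mem_support⟩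
  | @cons x x' z hadj P' ih =>
    rw [cons_isPath_iff] at hP
    by_cases hx : x ∈ R.support
    · exact ⟨0, Nat.zero_le _, hx⟩
    obtain ⟨i, hi, hmem⟩ := ih R hP.1
    have hlt : G.dist x' y < G.dist x y := by
      rw [dist_comm, dist_comm (u := x)]
      refine hG.dist_lt_of_adj_of_notMem_support hadj (R.append P'.reverse) ?_
      simp [mem_support_append_iff, hx, hP.2]
    exact ⟨i + 1, by omega, by simpa using hmem⟩

lemma IsAcyclic.exists_forall_getVert_mem (hG : G.IsAcyclic) {S : Set V}
    (hS : (G.induce S).Preconnected) {x y z : V} (hy : y ∈ S) (hz : z ∈ S) {P : G.Walk x z}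
    (hP : P.IsPath) : ∃ i ≤ G.dist x y, ∀ j ≥ i, P.getVert j ∈ S := by
  obtain ⟨R, hR⟩ := hS.exists_walk_support_subset hy hz
  obtain ⟨i, hi, hmem⟩ := hG.exists_getVert_mem_support_le_dist R P hP
  refine ⟨i, hi, fun j hij => ?_⟩
  have := hG.support_subset_of_isPath hS (hR _ hmem) hz (hP.drop i) _
    ((P.drop i).getVert_mem_support (j - i))
  rwa [drop_getVert, Nat.add_sub_cancel' hij] at this

end SimpleGraph

theorem stmt_0 {V : Type*} (G : SimpleGraph V) (hG : G.IsTree)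
    (S₁ S₂ : Set V)
    (h1 : (G.induce S₁).Connected) (h2 : (G.induce S₂).Connected)
    (hne : (S₁ ∩ S₂).Nonempty) (r : ℕ) :
    {x : V | ∃ y ∈ S₁ ∩ S₂, G.dist x y ≤ r} =
      {x : V | ∃ y ∈ S₁, G.dist x y ≤ r} ∩ {x : V | ∃ y ∈ S₂, G.dist x y ≤ r} := by
  obtain ⟨z, hz₁, hz₂⟩ := hne
  ext x
  refine ⟨fun ⟨y, hy, hxy⟩ => ⟨⟨y, hy.1, hxy⟩, ⟨y, hy.2, hxy⟩⟩, ?_⟩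
  rintro ⟨⟨y₁, hy₁, hxy₁⟩, ⟨y₂, hy₂, hxy₂⟩⟩
  obtain ⟨P, hP, -⟩ := hG.existsUnique_path x z
  obtain ⟨i₁, hi₁, hP₁⟩ := hG.isAcyclic.exists_forall_getVert_mem h1.preconnected hy₁ hz₁ hP
  obtain ⟨i₂, hi₂, hP₂⟩ := hG.isAcyclic.exists_forall_getVert_mem h2.preconnected hy₂ hz₂ hP
  refine ⟨P.getVert (max i₁ i₂), ⟨hP₁ _ (le_max_left _ _), hP₂ _ (le_max_right _ _)⟩, ?_⟩
  calc G.dist x (P.getVert (max i₁ i₂)) ≤ (P.take (max i₁ i₂)).length := SimpleGraph.dist_le _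
    _ ≤ max i₁ i₂ := by rw [SimpleGraph.Walk.take_length]; exact min_le_left _ _
    _ ≤ r := by omega
end

section
/- Let G be a tree with distance δ, and let S₁, S₂ be subtrees with S₁ ∩ S₂ = ∅ but S₁^[1] ∩ S₂^[1] ≠ ∅, where S^[1] denotes the set of vertices at distance at most 1 from S. Then S₁^[1] ∩ S₂^[1] consists of either a single vertex or two adjacent vertices (a path of length 1). -/
/-!
In a tree every edge is a bridge, so two disjoint subtrees `A` and `B` are joined by at most one
edge: a second edge `a'b'` would give a walk `a ⇝ a' — b' ⇝ b` inside `A ∪ B` avoiding the first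
edge `ab`. If `S₁` and `S₂` are joined by an edge `ab`, this shows `S₁^[1] ∩ S₂^[1] = {a, b}`.
Otherwise every vertex of `S₁^[1] ∩ S₂^[1]` lies outside `S₁ ∪ S₂` and has a neighbour in each;
for two such vertices `x ≠ m` the disjoint subtrees `S₁ ∪ {m}` and `S₂ ∪ {x}` would be joined both
by an edge from `m` into `S₂` and by an edge from `S₁` to `x`.
-/

namespace SimpleGraph

variable {V : Type*} {G : SimpleGraph V}

/-- The closed neighbourhood `S^[1]` of a vertex set `S`. -/
def closedNbhdSet (G : SimpleGraph V) (S : Set V) : Set V :=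
  S ∪ {x | ∃ y ∈ S, G.Adj x y}

lemma mem_closedNbhdSet {S : Set V} {x : V} :
    x ∈ G.closedNbhdSet S ↔ x ∈ S ∨ ∃ y ∈ S, G.Adj x y :=
  Iff.rfl

lemma Reachable.dist_le_one_iff {u v : V} (h : G.Reachable u v) :
    G.dist u v ≤ 1 ↔ u = v ∨ G.Adj u v := by
  rw [Nat.le_one_iff_eq_zero_or_eq_one, h.dist_eq_zero_iff, dist_eq_one_iff_adj]

lemma Connected.setOf_exists_dist_le_one (hG : G.Connected) (S : Set V) :
    {x | ∃ y ∈ S, G.dist x y ≤ 1} = G.closedNbhdSet S := by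
  ext x
  simp [mem_closedNbhdSet, (hG.preconnected _ _).dist_le_one_iff, and_or_left, exists_or]

lemma Preconnected.induce_insert {S : Set V} (hS : (G.induce S).Preconnected) {x p : V}
    (hp : p ∈ S) (hxp : G.Adj x p) : (G.induce (insert x S)).Preconnected := by
  have hsub : S ⊆ insert x S := Set.subset_insert x S
  have reach_p : ∀ u : ↥(insert x S), (G.induce (insert x S)).Reachable u ⟨p, hsub hp⟩ := by
    rintro ⟨u, rfl | hu⟩
    · exact Adj.reachable (by simpa using hxp)
    · exact (hS ⟨u, hu⟩ ⟨p, hp⟩).map (G.induceHomOfLE hsub).toHom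
  exact fun u v => (reach_p u).trans (reach_p v).symm

lemma reachable_deleteEdges_of_induce {A : Set V} (hA : (G.induce A).Preconnected)
    {e : Sym2 V} {w : V} (hw : w ∈ e) (hwA : w ∉ A) {u v : V} (hu : u ∈ A) (hv : v ∈ A) :
    (G.deleteEdges {e}).Reachable u v := by
  refine (hA ⟨u, hu⟩ ⟨v, hv⟩).map ⟨Subtype.val, fun {x y} hxy => ?_⟩
  refine deleteEdges_adj.2 ⟨hxy, fun hxye => hwA ?_⟩
  rw [Set.mem_singleton_iff] at hxye
  rcases Sym2.mem_iff.1 (hxye ▸ hw) with rfl | rfl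
  exacts [x.2, y.2]

theorem IsAcyclic.eq_of_adj_of_disjoint (hG : G.IsAcyclic) {A B : Set V}
    (hA : (G.induce A).Preconnected) (hB : (G.induce B).Preconnected) (hAB : Disjoint A B)
    {a b a' b' : V} (ha : a ∈ A) (hb : b ∈ B) (ha' : a' ∈ A) (hb' : b' ∈ B)
    (hab : G.Adj a b) (hab' : G.Adj a' b') : a = a' ∧ b = b' := by
  by_contra hne
  have hbA : b ∉ A := Set.disjoint_right.1 hAB hb
  have haB : a ∉ B := Set.disjoint_left.1 hAB ha
  have hedge : s(a', b') ∉ ({s(a, b)} : Set (Sym2 V)) := by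
    rw [Set.mem_singleton_iff, Sym2.eq_iff]
    rintro (⟨rfl, rfl⟩ | ⟨rfl, -⟩)
    exacts [hne ⟨rfl, rfl⟩, hbA ha']
  refine isAcyclic_iff_forall_adj_isBridge.1 hG hab ?_
  exact (reachable_deleteEdges_of_induce hA (Sym2.mem_mk_right a b) hbA ha ha').trans <|
    (Adj.reachable (deleteEdges_adj.2 ⟨hab', hedge⟩)).trans <|
    reachable_deleteEdges_of_induce hB (Sym2.mem_mk_left a b) haB hb' hb

section TwoSubtrees

variable {S₁ S₂ : Set V} (hG : G.IsAcyclic) (h1 : (G.induce S₁).Preconnected)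
  (h2 : (G.induce S₂).Preconnected) (hd : Disjoint S₁ S₂)
include hG h1 h2 hd

theorem closedNbhdSet_inter_eq_pair {a b : V} (ha : a ∈ S₁) (hb : b ∈ S₂) (hab : G.Adj a b) :
    G.closedNbhdSet S₁ ∩ G.closedNbhdSet S₂ = {a, b} := by
  ext x
  simp only [Set.mem_inter_iff, mem_closedNbhdSet, Set.mem_insert_iff, Set.mem_singleton_iff]
  constructor
  · rintro ⟨hx1, hx2⟩
    by_cases hxS₁ : x ∈ S₁
    · obtain ⟨q, hq, hxq⟩ := hx2.resolve_left (Set.disjoint_left.1 hd hxS₁)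
      exact .inl (hG.eq_of_adj_of_disjoint h1 h2 hd hxS₁ hq ha hb hxq hab).1
    obtain ⟨p, hp, hxp⟩ := hx1.resolve_left hxS₁
    by_cases hxS₂ : x ∈ S₂
    · exact .inr (hG.eq_of_adj_of_disjoint h1 h2 hd hp hxS₂ ha hb hxp.symm hab).2
    obtain ⟨q, hq, hxq⟩ := hx2.resolve_left hxS₂
    have hd' : Disjoint S₁ (insert x S₂) := Set.disjoint_insert_right.2 ⟨hxS₁, hd⟩
    obtain ⟨-, rfl⟩ := hG.eq_of_adj_of_disjoint h1 (h2.induce_insert hq hxq) hd' hp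
      (Set.mem_insert x S₂) ha (Set.mem_insert_of_mem x hb) hxp.symm hab
    exact absurd hb hxS₂
  · rintro (rfl | rfl)
    · exact ⟨.inl ha, .inr ⟨b, hb, hab⟩⟩
    · exact ⟨.inr ⟨a, ha, hab.symm⟩, .inl hb⟩

omit hG h1 h2 in
lemma exists_adj_of_mem_closedNbhdSet_inter (hno : ∀ a ∈ S₁, ∀ b ∈ S₂, ¬ G.Adj a b) {x : V}
    (hx : x ∈ G.closedNbhdSet S₁ ∩ G.closedNbhdSet S₂) :
    x ∉ S₁ ∧ x ∉ S₂ ∧ (∃ p ∈ S₁, G.Adj x p) ∧ ∃ q ∈ S₂, G.Adj x q := by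
  obtain ⟨hx1 | ⟨p, hp, hxp⟩, hx2 | ⟨q, hq, hxq⟩⟩ := hx
  · exact absurd hx2 (Set.disjoint_left.1 hd hx1)
  · exact absurd hxq (hno x hx1 q hq)
  · exact absurd hxp.symm (hno p hp x hx2)
  · exact ⟨fun hx1 => hno x hx1 q hq hxq, fun hx2 => hno p hp x hx2 hxp.symm,
      ⟨p, hp, hxp⟩, q, hq, hxq⟩

theorem closedNbhdSet_inter_eq_singleton (hno : ∀ a ∈ S₁, ∀ b ∈ S₂, ¬ G.Adj a b) {m : V}
    (hm : m ∈ G.closedNbhdSet S₁ ∩ G.closedNbhdSet S₂) :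
    G.closedNbhdSet S₁ ∩ G.closedNbhdSet S₂ = {m} := by
  refine Set.eq_singleton_iff_unique_mem.2 ⟨hm, fun x hx => ?_⟩
  obtain ⟨hx1, hx2, ⟨p, hp, hxp⟩, q, hq, hxq⟩ := exists_adj_of_mem_closedNbhdSet_inter hd hno hx
  obtain ⟨hm1, hm2, ⟨p', hp', hmp'⟩, q', hq', hmq'⟩ :=
    exists_adj_of_mem_closedNbhdSet_inter hd hno hm
  by_contra hxm
  have hd' : Disjoint (insert m S₁) (insert x S₂) := by
    simp only [Set.disjoint_insert_left, Set.disjoint_insert_right, Set.mem_insert_iff]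
    exact ⟨not_or.2 ⟨hxm, hx1⟩, hm2, hd⟩
  obtain ⟨rfl, -⟩ := hG.eq_of_adj_of_disjoint (h1.induce_insert hp' hmp')
    (h2.induce_insert hq hxq) hd' (Set.mem_insert m S₁) (Set.mem_insert_of_mem x hq')
    (Set.mem_insert_of_mem m hp) (Set.mem_insert x S₂) hmq' hxp.symm
  exact hm1 hp

end TwoSubtrees

end SimpleGraph

open SimpleGraph

theorem stmt_2_general {V : Type*} (G : SimpleGraph V) (hG : G.IsTree)
    (S₁ S₂ : Set V)
    (h1 : (G.induce S₁).Connected) (h2 : (G.induce S₂).Connected)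
    (hdisj : S₁ ∩ S₂ = ∅)
    (hne : ({x : V | ∃ y ∈ S₁, G.dist x y ≤ 1} ∩ {x : V | ∃ y ∈ S₂, G.dist x y ≤ 1}).Nonempty) :
    (∃ x : V, {x' : V | ∃ y ∈ S₁, G.dist x' y ≤ 1} ∩ {x' : V | ∃ y ∈ S₂, G.dist x' y ≤ 1} = {x}) ∨
    (∃ x y : V, G.Adj x y ∧
      {x' : V | ∃ y' ∈ S₁, G.dist x' y' ≤ 1} ∩ {x' : V | ∃ y' ∈ S₂, G.dist x' y' ≤ 1} = {x, y}) := by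
  simp only [hG.connected.setOf_exists_dist_le_one] at hne ⊢
  have hd : Disjoint S₁ S₂ := Set.disjoint_iff_inter_eq_empty.2 hdisj
  by_cases hedge : ∃ a ∈ S₁, ∃ b ∈ S₂, G.Adj a b
  · obtain ⟨a, ha, b, hb, hab⟩ := hedge
    exact .inr ⟨a, b, hab,
      closedNbhdSet_inter_eq_pair hG.isAcyclic h1.preconnected h2.preconnected hd ha hb hab⟩
  · push Not at hedge
    obtain ⟨m, hm⟩ := hne
    exact .inl ⟨m,
      closedNbhdSet_inter_eq_singleton hG.isAcyclic h1.preconnected h2.preconnected hd hedge hm⟩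

theorem stmt_2 {V : Type*} (G : SimpleGraph V) (hG : G.IsTree)
    (S₁ S₂ : Set V) (h1ne : S₁.Nonempty) (h2ne : S₂.Nonempty)
    (h1 : (G.induce S₁).Connected) (h2 : (G.induce S₂).Connected)
    (hdisj : S₁ ∩ S₂ = ∅)
    (hne : ({x : V | ∃ y ∈ S₁, G.dist x y ≤ 1} ∩ {x : V | ∃ y ∈ S₂, G.dist x y ≤ 1}).Nonempty) :
    (∃ x : V, {x' : V | ∃ y ∈ S₁, G.dist x' y ≤ 1} ∩ {x' : V | ∃ y ∈ S₂, G.dist x' y ≤ 1} = {x}) ∨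
    (∃ x y : V, G.Adj x y ∧
      {x' : V | ∃ y' ∈ S₁, G.dist x' y' ≤ 1} ∩ {x' : V | ∃ y' ∈ S₂, G.dist x' y' ≤ 1} = {x, y}) :=
  stmt_2_general G hG S₁ S₂ h1 h2 hdisj hne
end

section
/- Let G be a tree with distance δ. For connected vertex sets S₁, S₂ and natural numbers t₁, t₂, the sets S₁^[t₁] and S₂^[t₂] intersect if and only if t₁ + t₂ ≥ δ(S₁, S₂), where δ(S₁,S₂) = min over x ∈ S₁, y ∈ S₂ of δ(x,y), and S^[t] is the set of vertices within distance t of S. -/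
open SimpleGraph

lemma aux_getVert {V : Type*} {G : SimpleGraph V} (hconn : G.Connected) :
    ∀ {x y : V} (p : G.Walk x y) (n : ℕ),
      G.dist x (p.getVert n) ≤ n ∧ G.dist (p.getVert n) y ≤ p.length - n := by
  intro x y p
  induction p with
  | nil =>
    intro n
    exact ⟨(SimpleGraph.dist_self).le.trans (Nat.zero_le _),
      (SimpleGraph.dist_self).le.trans (Nat.zero_le _)⟩
  | @cons u v w h q ih =>
    intro n
    cases n with
    | zero =>
      simp only [Walk.getVert_zero, Nat.sub_zero]
      exact ⟨by simp, SimpleGraph.dist_le _⟩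
    | succ n =>
      obtain ⟨ih1, ih2⟩ := ih n
      refine ⟨?_, ?_⟩
      · calc G.dist u ((Walk.cons h q).getVert (n+1))
            ≤ G.dist u v + G.dist v (q.getVert n) := by
              rw [Walk.getVert_cons_succ]; exact hconn.dist_triangle
          _ ≤ 1 + n := by
              have : G.dist u v ≤ 1 := by
                simpa using SimpleGraph.dist_le (Walk.cons h Walk.nil)
              omega
          _ = n + 1 := by omega
      · rw [Walk.getVert_cons_succ]
        simpa using ih2.trans (by omega)

theorem stmt_4 {V : Type*} (G : SimpleGraph V) (hG : G.IsTree)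
    (S₁ S₂ : Set V) (h1ne : S₁.Nonempty) (h2ne : S₂.Nonempty)
    (h1f : S₁.Finite) (h2f : S₂.Finite)
    (h1 : (G.induce S₁).Connected) (h2 : (G.induce S₂).Connected)
    (t₁ t₂ : ℕ) :
    ({x : V | ∃ y ∈ S₁, G.dist x y ≤ t₁} ∩ {x : V | ∃ y ∈ S₂, G.dist x y ≤ t₂}).Nonempty ↔
      sInf {n : ℕ | ∃ x ∈ S₁, ∃ y ∈ S₂, G.dist x y = n} ≤ t₁ + t₂ := by
  have hconn : G.Connected := hG.isConnected
  obtain ⟨x₀, hx₀⟩ := h1ne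
  obtain ⟨y₀, hy₀⟩ := h2ne
  have hSne : {n : ℕ | ∃ x ∈ S₁, ∃ y ∈ S₂, G.dist x y = n}.Nonempty :=
    ⟨G.dist x₀ y₀, x₀, hx₀, y₀, hy₀, rfl⟩
  constructor
  · rintro ⟨z, ⟨a, ha, hza⟩, ⟨b, hb, hzb⟩⟩
    have : G.dist a b ≤ t₁ + t₂ := by
      calc G.dist a b ≤ G.dist a z + G.dist z b := hconn.dist_triangle
        _ ≤ t₁ + t₂ := by
            have hc : G.dist a z = G.dist z a := SimpleGraph.dist_comm
            omega
    exact le_trans (Nat.sInf_le ⟨a, ha, b, hb, rfl⟩) this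
  · intro hle
    obtain ⟨a, ha, b, hb, hab⟩ := Nat.sInf_mem hSne
    obtain ⟨p, hp⟩ := hconn.exists_walk_length_eq_dist a b
    set k : ℕ := min t₁ (G.dist a b) with hk
    obtain ⟨g1, g2⟩ := aux_getVert hconn p k
    refine ⟨p.getVert k, ⟨a, ha, ?_⟩, ⟨b, hb, ?_⟩⟩
    · rw [SimpleGraph.dist_comm]
      exact g1.trans (min_le_left _ _)
    · rw [hp] at g2
      have : G.dist a b - k ≤ t₂ := by rw [← hab] at hle; omega
      exact g2.trans this
end

section
/- Let k be a nonarchimedean local field with ring of integers O, and let q ∈ M₂(k) be a trace-zero matrix (pure quaternion) with q² = a·I where a = b² for some b ∈ O, b ≠ 0. Then the maximal integer p such that there exists c ∈ O with (q − c·I)/π^p integral over O (i.e., the depth of O[q]) equals v(2b), where v is the normalized valuation. -/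
/-!
`(q - c)/π^p` has trace `-2c/π^p` and determinant `(c² - b²)/π^{2p}`, so `p` is admissible iff
`π^p ∣ 2c` and `π^{2p} ∣ (c + b)(c - b)`. Then `(c ± b)/π^p` are the roots of a monic quadratic
over `O`, hence lie in `O` because `O` is integrally closed, and `π^p` divides their difference
`2b`. Conversely `c = b` realises `p = v(2b)`.
-/

open Polynomial

theorem IsIntegrallyClosed.dvd_of_dvd_add_of_sq_dvd_mul {R : Type*} [CommRing R] [IsDomain R]
    [IsIntegrallyClosed R] {x u w : R} (hadd : x ∣ u + w) (hmul : x ^ 2 ∣ u * w) : x ∣ u := by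
  rcases eq_or_ne x 0 with rfl | hx
  · have hw : w = -u := eq_neg_of_add_eq_zero_right (zero_dvd_iff.mp hadd)
    rw [hw, zero_pow two_ne_zero, zero_dvd_iff, mul_neg, neg_eq_zero, mul_self_eq_zero] at hmul
    rw [hmul]
  obtain ⟨t, ht⟩ := hadd
  obtain ⟨s, hs⟩ := hmul
  set φ := algebraMap R (FractionRing R) with hφ
  have hinj : Function.Injective φ := IsFractionRing.injective R _
  have hx' : φ x ≠ 0 := (map_ne_zero_iff _ hinj).mpr hx
  have hroot : aeval (φ u / φ x) (X ^ 2 - (C t * X - C s)) = 0 := by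
    have ht' : φ u + φ w = φ x * φ t := by simpa using congrArg φ ht
    have hs' : φ u * φ w = φ x ^ 2 * φ s := by simpa using congrArg φ hs
    simp only [map_sub, map_pow, aeval_X, map_mul, aeval_C, ← hφ]
    field_simp
    linear_combination φ u * ht' - hs'
  have hint : IsIntegral R (φ u / φ x) :=
    ⟨X ^ 2 - (C t * X - C s), monic_X_pow_sub (by compute_degree!), by rwa [← aeval_def]⟩
  obtain ⟨r, hr⟩ := IsIntegrallyClosed.algebraMap_eq_of_integral hint
  exact ⟨r, hinj (by rw [map_mul, hr, mul_div_cancel₀ _ hx'])⟩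

theorem IsIntegrallyClosed.dvd_two_mul_of_dvd_two_mul_of_sq_dvd_sq_sub_sq {R : Type*}
    [CommRing R] [IsDomain R] [IsIntegrallyClosed R] {x b c : R}
    (hc : x ∣ 2 * c) (hsq : x ^ 2 ∣ c ^ 2 - b ^ 2) : x ∣ 2 * b := by
  have hadd : x ∣ (c + b) + (c - b) := by rwa [add_add_sub_cancel, ← two_mul]
  have hplus : x ∣ c + b := dvd_of_dvd_add_of_sq_dvd_mul hadd (by rwa [← sq_sub_sq])
  have hminus : x ∣ c - b :=
    dvd_of_dvd_add_of_sq_dvd_mul (add_comm (c + b) _ ▸ hadd) (by rwa [mul_comm, ← sq_sub_sq])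
  simpa [two_mul] using dvd_sub hplus hminus

theorem inv_algebraMap_mul_algebraMap_mem_range_iff {R K : Type*} [CommRing R] [Field K]
    [Algebra R K] [FaithfulSMul R K] {x : R} (hx : x ≠ 0) (y : R) :
    (algebraMap R K x)⁻¹ * algebraMap R K y ∈ Set.range (algebraMap R K) ↔ x ∣ y := by
  have hinj : Function.Injective (algebraMap R K) := FaithfulSMul.algebraMap_injective R K
  have hx' : algebraMap R K x ≠ 0 := (map_ne_zero_iff _ hinj).mpr hx
  constructor
  · rintro ⟨d, hd⟩
    refine ⟨d, hinj ?_⟩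
    rw [map_mul, hd, mul_inv_cancel_left₀ hx']
  · rintro ⟨d, rfl⟩
    exact ⟨d, by rw [map_mul, inv_mul_cancel_left₀ hx']⟩

theorem Matrix.det_sub_smul_one_of_trace_eq_zero {R : Type*} [CommRing R]
    {q : Matrix (Fin 2) (Fin 2) R} (htr : q.trace = 0) {s : R} (hq : q * q = s • 1) (c : R) :
    (q - c • 1).det = c ^ 2 - s := by
  have h11 : q 1 1 = -q 0 0 := by
    rw [Matrix.trace_fin_two] at htr
    linear_combination htr
  have h00 : q 0 0 * q 0 0 + q 0 1 * q 1 0 = s := by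
    simpa [Matrix.mul_apply, Fin.sum_univ_two] using congrFun (congrFun hq 0) 0
  simp only [Matrix.det_fin_two, Matrix.sub_apply, Matrix.smul_apply, Matrix.one_apply_eq,
    Matrix.one_apply_ne zero_ne_one, Matrix.one_apply_ne one_ne_zero, smul_eq_mul, h11]
  linear_combination -h00

theorem trace_det_inv_smul_sub_mem_range_iff {R K : Type*} [CommRing R] [IsDomain R] [Field K]
    [Algebra R K] [FaithfulSMul R K] {q : Matrix (Fin 2) (Fin 2) K} (htr : q.trace = 0) {s : R}
    (hq : q * q = algebraMap R K s • 1) {x : R} (hx : x ≠ 0) (c : R) :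
    ((algebraMap R K x)⁻¹ • (q - algebraMap R K c • 1)).trace ∈ Set.range (algebraMap R K) ∧
      ((algebraMap R K x)⁻¹ • (q - algebraMap R K c • 1)).det ∈ Set.range (algebraMap R K) ↔
      x ∣ 2 * c ∧ x ^ 2 ∣ c ^ 2 - s := by
  have htrace : ((algebraMap R K x)⁻¹ • (q - algebraMap R K c • 1)).trace =
      (algebraMap R K x)⁻¹ * algebraMap R K (-(2 * c)) := by
    simp only [Matrix.trace_smul, Matrix.trace_sub, Matrix.trace_one, htr,
      Fintype.card_fin, smul_eq_mul, map_neg, map_mul, map_ofNat]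
    ring
  have hdet : ((algebraMap R K x)⁻¹ • (q - algebraMap R K c • 1)).det =
      (algebraMap R K (x ^ 2))⁻¹ * algebraMap R K (c ^ 2 - s) := by
    rw [Matrix.det_smul, Matrix.det_sub_smul_one_of_trace_eq_zero htr hq]
    simp
  rw [htrace, hdet, inv_algebraMap_mul_algebraMap_mem_range_iff hx,
    inv_algebraMap_mul_algebraMap_mem_range_iff (pow_ne_zero 2 hx), dvd_neg]

theorem stmt_9_general (O : Type*) [CommRing O] [IsDomain O] [IsDiscreteValuationRing O]
    (K : Type*) [Field K] [Algebra O K] [IsFractionRing O K]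
    (π : O) (hπ : Irreducible π)
    (q : Matrix (Fin 2) (Fin 2) K) (htr : Matrix.trace q = 0)
    (a b : O) (hab : a = b ^ 2)
    (hq2 : q * q = algebraMap O K a • (1 : Matrix (Fin 2) (Fin 2) K))
    (n : ℕ) (hn : ∃ ν : O, IsUnit ν ∧ 2 * b = ν * π ^ n) :
    IsGreatest {p : ℕ | ∃ c : O,
      Matrix.trace (((algebraMap O K π) ^ p)⁻¹ •
          (q - algebraMap O K c • (1 : Matrix (Fin 2) (Fin 2) K))) ∈
        Set.range (algebraMap O K) ∧
      Matrix.det (((algebraMap O K π) ^ p)⁻¹ •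
          (q - algebraMap O K c • (1 : Matrix (Fin 2) (Fin 2) K))) ∈
        Set.range (algebraMap O K)} n := by
  obtain ⟨ν, hν, h2b⟩ := hn
  subst hab
  have hmem (p : ℕ) (c : O) := trace_det_inv_smul_sub_mem_range_iff htr hq2
    (pow_ne_zero p hπ.ne_zero) c
  simp only [map_pow] at hmem
  refine ⟨⟨b, (hmem n b).2 ⟨⟨ν, by rw [h2b, mul_comm]⟩, by simp⟩⟩, ?_⟩
  rintro p ⟨c, hc⟩
  obtain ⟨hdvd2c, hdvdsq⟩ := (hmem p c).1 hc
  have hdvd2b : π ^ p ∣ ν * π ^ n :=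
    h2b ▸ IsIntegrallyClosed.dvd_two_mul_of_dvd_two_mul_of_sq_dvd_sq_sub_sq hdvd2c hdvdsq
  exact (pow_dvd_pow_iff hπ.ne_zero hπ.not_isUnit).mp (hν.dvd_mul_left.mp hdvd2b)

/-- For a pure quaternion `q ∈ M₂(k)` with `q² = b²·I`, `b ∈ O` nonzero, the depth of
`O[q]` — the greatest `p` with `(q − c·I)/π^p` integral for some `c ∈ O` — equals `v(2b)`. -/
theorem stmt_9 (O : Type*) [CommRing O] [IsDomain O] [IsDiscreteValuationRing O]
    [IsAdicComplete (IsLocalRing.maximalIdeal O) O] [Finite (IsLocalRing.ResidueField O)]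
    (K : Type*) [Field K] [Algebra O K] [IsFractionRing O K]
    (π : O) (hπ : Irreducible π)
    (q : Matrix (Fin 2) (Fin 2) K) (htr : Matrix.trace q = 0)
    (a b : O) (hb : b ≠ 0) (hab : a = b ^ 2)
    (hq2 : q * q = algebraMap O K a • (1 : Matrix (Fin 2) (Fin 2) K))
    (n : ℕ) (hn : ∃ ν : O, IsUnit ν ∧ 2 * b = ν * π ^ n) :
    IsGreatest {p : ℕ | ∃ c : O,
      Matrix.trace (((algebraMap O K π) ^ p)⁻¹ •
          (q - algebraMap O K c • (1 : Matrix (Fin 2) (Fin 2) K))) ∈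
        Set.range (algebraMap O K) ∧
      Matrix.det (((algebraMap O K π) ^ p)⁻¹ •
          (q - algebraMap O K c • (1 : Matrix (Fin 2) (Fin 2) K))) ∈
        Set.range (algebraMap O K)} n :=
  stmt_9_general O K π hπ q htr a b hab hq2 n hn
end

section
/- Let k be a nonarchimedean local field with ring of integers O and v the normalized valuation, and let q be a trace-zero element of M₂(k) with q² = a·I where a ∈ O^* is a unit. Then the depth p of O[q] satisfies p ≤ v(2), with equality if and only if k(q) is isomorphic to k × k or to the unramified quadratic extension of k. -/
/-!
The trace and determinant conditions defining the depth reduce, via `tr (q - c) = -2c` and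
`det (q - c) = c² - a`, to `π^p ∣ 2c` and `π^(2p) ∣ c² - a`. If `p > v(2)`, the first forces
`π ∣ c`, and then the second forces `π ∣ a`. For `p = v(2)` the first is automatic and the second
says `a ≡ c² mod 4`. Such a `c` exists iff `a` is a square or the quadratic defect of `a` is
exactly `(4)`: if even `a ≡ c² mod 4π`, Hensel's lemma solves `z² + z = (a - c²)/(4c²)`, and then
`a = c² (1 + 2z)²` (local square theorem).
-/

open Polynomial IsLocalRing

theorem HenselianRing.isSquare_one_add_four_mul {R : Type*} [CommRing R] {I : Ideal R}
    [HenselianRing R I] {s : R} (hs : s ∈ I) : IsSquare (1 + 4 * s) := by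
  have hmonic : (X ^ 2 + X - C s : R[X]).Monic := by
    rw [add_sub_assoc]
    exact monic_X_pow_add ((degree_X_sub_C_le s).trans_lt (by norm_num))
  obtain ⟨z, hz, -⟩ := HenselianRing.is_henselian (I := I) (X ^ 2 + X - C s) hmonic 0
    (by simpa using hs) (by simp)
  simp only [IsRoot, eval_sub, eval_add, eval_pow, eval_X, eval_C] at hz
  exact ⟨1 + 2 * z, by linear_combination (-4) * hz⟩

theorem IsLocalRing.isSquare_of_four_mul_dvd_sub_sq {R : Type*} [CommRing R] [IsLocalRing R]
    [HenselianRing R (maximalIdeal R)] {a c m : R} (ha : IsUnit a) (hm : m ∈ maximalIdeal R)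
    (h : 4 * m ∣ a - c ^ 2) : IsSquare a := by
  obtain ⟨t, ht⟩ := h
  have hc : IsUnit c := by
    by_contra hc
    have hc2 : c ^ 2 ∈ maximalIdeal R := Ideal.pow_mem_of_mem _ hc 2 two_pos
    refine (mem_maximalIdeal a).mp ?_ ha
    rw [← sub_add_cancel a (c ^ 2), ht, mul_assoc]
    exact add_mem (Ideal.mul_mem_left _ _ (Ideal.mul_mem_right _ _ hm)) hc2
  obtain ⟨c', hc'⟩ := hc.exists_right_inv
  have hs : m * t * c' ^ 2 ∈ maximalIdeal R := Ideal.mul_mem_right _ _ (Ideal.mul_mem_right _ _ hm)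
  have ha' : a = c ^ 2 * (1 + 4 * (m * t * c' ^ 2)) := by
    linear_combination ht - 4 * m * t * (c * c' + 1) * hc'
  exact ha' ▸ (IsSquare.sq c).mul (HenselianRing.isSquare_one_add_four_mul hs)

theorem IsIntegrallyClosed.isSquare_algebraMap_iff {O K : Type*} [CommRing O] [IsDomain O]
    [IsIntegrallyClosed O] [Field K] [Algebra O K] [IsFractionRing O K] {a : O} :
    IsSquare (algebraMap O K a) ↔ IsSquare a := by
  refine ⟨fun ⟨r, hr⟩ => ?_, fun h => h.map _⟩
  have hint : IsIntegral O r :=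
    IsIntegral.of_pow two_pos (by rw [sq, ← hr]; exact isIntegral_algebraMap)
  obtain ⟨w, rfl⟩ := IsIntegrallyClosed.isIntegral_iff.mp hint
  exact ⟨w, IsFractionRing.injective O K (by rw [hr, map_mul])⟩

namespace Matrix

variable {R : Type*} [CommRing R] {q : Matrix (Fin 2) (Fin 2) R}

theorem trace_sub_smul_one_of_trace_eq_zero (htr : q.trace = 0) (c : R) :
    (q - c • 1).trace = -(2 * c) := by
  rw [trace_sub, trace_smul, trace_one, htr, Fintype.card_fin, smul_eq_mul]
  push_cast
  ring

theorem det_sub_smul_one_of_mul_self_eq {b : R} (htr : q.trace = 0) (hq : q * q = b • 1)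
    (c : R) : (q - c • 1).det = c ^ 2 - b := by
  have h11 : q 1 1 = -q 0 0 := by rw [trace_fin_two] at htr; linear_combination htr
  have hb : q 0 0 * q 0 0 + q 0 1 * q 1 0 = b := by
    simpa [mul_apply, Fin.sum_univ_two] using congrFun (congrFun hq 0) 0
  rw [det_fin_two]
  simp only [sub_apply, smul_apply, one_apply_eq, one_apply_ne zero_ne_one,
    one_apply_ne one_ne_zero, smul_eq_mul, h11]
  linear_combination -hb

end Matrix

section FractionRing

variable {O K : Type*} [CommRing O] [Field K] [Algebra O K] [IsFractionRing O K]
  {q : Matrix (Fin 2) (Fin 2) K} {d : O}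

theorem inv_algebraMap_mul_mem_range_iff {x : O} (hd : d ≠ 0) :
    (algebraMap O K d)⁻¹ * algebraMap O K x ∈ Set.range (algebraMap O K) ↔ d ∣ x := by
  have hd' : algebraMap O K d ≠ 0 := (map_ne_zero_iff _ (IsFractionRing.injective O K)).mpr hd
  refine ⟨fun ⟨y, hy⟩ => ⟨y, IsFractionRing.injective O K ?_⟩, fun ⟨y, hy⟩ => ⟨y, ?_⟩⟩
  · rw [map_mul, hy, mul_inv_cancel_left₀ hd']
  · rw [hy, map_mul, inv_mul_cancel_left₀ hd']

theorem trace_inv_smul_sub_mem_range_iff (hd : d ≠ 0) (htr : q.trace = 0) (c : O) :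
    ((algebraMap O K d)⁻¹ • (q - algebraMap O K c • 1)).trace ∈ Set.range (algebraMap O K) ↔
      d ∣ 2 * c := by
  rw [Matrix.trace_smul, Matrix.trace_sub_smul_one_of_trace_eq_zero htr, smul_eq_mul,
    ← map_ofNat (algebraMap O K) 2, ← map_mul, ← map_neg, inv_algebraMap_mul_mem_range_iff hd,
    dvd_neg]

theorem det_inv_smul_sub_mem_range_iff [IsDomain O] {a : O} (hd : d ≠ 0) (htr : q.trace = 0)
    (hq : q * q = algebraMap O K a • 1) (c : O) :
    ((algebraMap O K d)⁻¹ • (q - algebraMap O K c • 1)).det ∈ Set.range (algebraMap O K) ↔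
      d ^ 2 ∣ c ^ 2 - a := by
  rw [Matrix.det_smul, Matrix.det_sub_smul_one_of_mul_self_eq htr hq, Fintype.card_fin, inv_pow,
    ← map_pow, ← map_pow, ← map_sub, inv_algebraMap_mul_mem_range_iff (pow_ne_zero 2 hd)]

end FractionRing

theorem le_of_pow_dvd_two_mul_of_sq_dvd_sq_sub {O : Type*} [CommRing O] [IsDomain O]
    {π a c : O} {e p : ℕ} (hπ : Irreducible π) (h2 : Associated (π ^ e) 2) (ha : IsUnit a)
    (htr : π ^ p ∣ 2 * c) (hdet : (π ^ p) ^ 2 ∣ c ^ 2 - a) : p ≤ e := by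
  by_contra! hep
  have hc : π ∣ c := by
    have : π ^ (e + 1) ∣ π ^ e * c :=
      (h2.mul_right c).dvd_iff_dvd_right.mpr ((pow_dvd_pow π hep).trans htr)
    rw [pow_succ] at this
    exact (mul_dvd_mul_iff_left (pow_ne_zero e hπ.ne_zero)).mp this
  have hπdet : π ∣ c ^ 2 - a :=
    (dvd_pow (dvd_pow_self π (by omega)) two_ne_zero).trans hdet
  have hπa : π ∣ a := by
    simpa using dvd_sub (dvd_pow hc two_ne_zero) hπdet
  exact hπ.not_isUnit (isUnit_of_dvd_unit hπa ha)

section DiscreteValuationRing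

variable {O : Type*} [CommRing O] [IsDomain O] [IsDiscreteValuationRing O]

theorem Irreducible.dvd_of_not_isUnit {π b : O} (hπ : Irreducible π) (hb : ¬IsUnit b) :
    π ∣ b := by
  rwa [← Ideal.mem_span_singleton, ← hπ.maximalIdeal_eq, mem_maximalIdeal]

theorem Irreducible.dvd_of_not_mul_dvd {π b d : O} (hπ : Irreducible π) (h : ¬d * π ∣ b) :
    b ∣ d := by
  obtain hbd | ⟨x, rfl⟩ := ValuationRing.dvd_total b d
  · exact hbd
  · have hx : IsUnit x := by_contra fun hx => h (mul_dvd_mul_left d (hπ.dvd_of_not_isUnit hx))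
    exact hx.mul_right_dvd.mpr dvd_rfl

theorem iInf_span_singleton_eq_span_singleton_iff {ι : Type*} [Nonempty ι] {π d : O}
    (hπ : Irreducible π) (hd : d ≠ 0) (f : ι → O) :
    ⨅ i, Ideal.span {f i} = Ideal.span {d} ↔ (∃ i, d ∣ f i) ∧ ∀ i, ¬d * π ∣ f i := by
  have not_mul_dvd : ∀ {x : O}, x ≠ 0 → ¬x * π ∣ x := fun hx h =>
    hπ.not_isUnit (isUnit_of_dvd_one ((mul_dvd_mul_iff_left hx).mp (by rwa [mul_one])))
  constructor
  · intro h
    refine ⟨?_, fun i hi => ?_⟩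
    · by_contra! hnd
      by_cases hdu : IsUnit d
      · exact hnd (Classical.arbitrary ι) hdu.dvd
      obtain ⟨d', rfl⟩ := hπ.dvd_of_not_isUnit hdu
      rw [mul_comm π d'] at hnd hd h
      have hle : Ideal.span {d'} ≤ Ideal.span {d' * π} := h ▸ le_iInf fun i =>
        Ideal.span_singleton_le_span_singleton.mpr (hπ.dvd_of_not_mul_dvd (hnd i))
      exact not_mul_dvd (left_ne_zero_of_mul hd) (Ideal.span_singleton_le_span_singleton.mp hle)
    · have hle : Ideal.span {d} ≤ Ideal.span {d * π} :=
        h ▸ (iInf_le _ i).trans (Ideal.span_singleton_le_span_singleton.mpr hi)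
      exact not_mul_dvd hd (Ideal.span_singleton_le_span_singleton.mp hle)
  · rintro ⟨⟨i, hi⟩, hnd⟩
    refine le_antisymm ((iInf_le _ i).trans (Ideal.span_singleton_le_span_singleton.mpr hi)) ?_
    exact le_iInf fun j =>
      Ideal.span_singleton_le_span_singleton.mpr (hπ.dvd_of_not_mul_dvd (hnd j))

theorem exists_four_dvd_sub_sq_iff [HenselianRing O (maximalIdeal O)] {a : O} (ha : IsUnit a)
    (h2 : (2 : O) ≠ 0) :
    (∃ c, 2 ^ 2 ∣ a - c ^ 2) ↔
      IsSquare a ∨ ⨅ x : O, Ideal.span {a - x ^ 2} = Ideal.span {2 ^ 2} := by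
  obtain ⟨π, hπ⟩ := IsDiscreteValuationRing.exists_irreducible O
  rw [iInf_span_singleton_eq_span_singleton_iff hπ (pow_ne_zero 2 h2)]
  constructor
  · rintro ⟨c, hc⟩
    by_cases hsq : ∃ x, 2 ^ 2 * π ∣ a - x ^ 2
    · obtain ⟨x, hx⟩ := hsq
      refine .inl (isSquare_of_four_mul_dvd_sub_sq ha ?_ (by norm_num at hx ⊢; exact hx))
      rw [hπ.maximalIdeal_eq]; exact Ideal.mem_span_singleton_self π
    · push Not at hsq
      exact .inr ⟨⟨c, hc⟩, hsq⟩
  · rintro (⟨w, rfl⟩ | ⟨h, -⟩)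
    · exact ⟨w, by simp [sq]⟩
    · exact h

end DiscreteValuationRing

-- `k(q) ≅ k × k` iff `a` is a square in `k`, and `k(q)` is the unramified quadratic extension
-- iff the quadratic defect `⨅ x, (a - x²)` of `a` is `(4)`.
theorem stmt_11_general (O : Type*) [CommRing O] [IsDomain O] [IsDiscreteValuationRing O]
    [IsAdicComplete (IsLocalRing.maximalIdeal O) O]
    (K : Type*) [Field K] [Algebra O K] [IsFractionRing O K]
    (π : O) (hπ : Irreducible π)
    (e : ℕ) (he : ∃ ν : O, IsUnit ν ∧ (2 : O) = ν * π ^ e)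
    (q : Matrix (Fin 2) (Fin 2) K) (htr : Matrix.trace q = 0)
    (a : O) (ha : IsUnit a)
    (hq2 : q * q = algebraMap O K a • (1 : Matrix (Fin 2) (Fin 2) K)) :
    (∀ p ∈ {p : ℕ | ∃ c : O,
      Matrix.trace (((algebraMap O K π) ^ p)⁻¹ •
          (q - algebraMap O K c • (1 : Matrix (Fin 2) (Fin 2) K))) ∈
        Set.range (algebraMap O K) ∧
      Matrix.det (((algebraMap O K π) ^ p)⁻¹ •
          (q - algebraMap O K c • (1 : Matrix (Fin 2) (Fin 2) K))) ∈
        Set.range (algebraMap O K)}, p ≤ e) ∧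
    ((e ∈ {p : ℕ | ∃ c : O,
      Matrix.trace (((algebraMap O K π) ^ p)⁻¹ •
          (q - algebraMap O K c • (1 : Matrix (Fin 2) (Fin 2) K))) ∈
        Set.range (algebraMap O K) ∧
      Matrix.det (((algebraMap O K π) ^ p)⁻¹ •
          (q - algebraMap O K c • (1 : Matrix (Fin 2) (Fin 2) K))) ∈
        Set.range (algebraMap O K)}) ↔
      (IsSquare (algebraMap O K a) ∨
        (⨅ x : O, Ideal.span {a - x ^ 2}) = Ideal.span {(2 : O) ^ 2})) := by
  obtain ⟨ν, hν, h2⟩ := he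
  have h2' : Associated (π ^ e) 2 := ⟨hν.unit, by rw [h2, mul_comm]; rfl⟩
  have hπp : ∀ p, π ^ p ≠ 0 := fun p => pow_ne_zero p hπ.ne_zero
  simp only [Set.mem_ofPred_eq, ← map_pow, trace_inv_smul_sub_mem_range_iff (hπp _) htr,
    det_inv_smul_sub_mem_range_iff (hπp _) htr hq2, IsIntegrallyClosed.isSquare_algebraMap_iff]
  refine ⟨fun p ⟨c, hc2, hcsq⟩ => le_of_pow_dvd_two_mul_of_sq_dvd_sq_sub hπ h2' ha hc2 hcsq, ?_⟩
  rw [← exists_four_dvd_sub_sq_iff ha (h2'.ne_zero_iff.mp (hπp e))]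
  refine exists_congr fun c => ?_
  rw [h2'.pow_pow.dvd_iff_dvd_left, dvd_sub_comm]
  exact and_iff_right (h2'.dvd.mul_right c)

/-- For a pure quaternion `q ∈ M₂(k)` with `q² = a·I`, `a` a unit, the depth `p` of `O[q]`
satisfies `p ≤ v(2)`, with equality iff `k(q) ≅ k × k` (i.e. `a` is a square in `k`) or
`k(q)/k` is the unramified quadratic extension (i.e. `a` has quadratic defect `(4)`). -/
theorem stmt_11 (O : Type*) [CommRing O] [IsDomain O] [IsDiscreteValuationRing O]
    [IsAdicComplete (IsLocalRing.maximalIdeal O) O] [Finite (IsLocalRing.ResidueField O)]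
    (K : Type*) [Field K] [Algebra O K] [IsFractionRing O K]
    (π : O) (hπ : Irreducible π)
    (e : ℕ) (he : ∃ ν : O, IsUnit ν ∧ (2 : O) = ν * π ^ e)
    (q : Matrix (Fin 2) (Fin 2) K) (htr : Matrix.trace q = 0)
    (a : O) (ha : IsUnit a)
    (hq2 : q * q = algebraMap O K a • (1 : Matrix (Fin 2) (Fin 2) K)) :
    (∀ p ∈ {p : ℕ | ∃ c : O,
      Matrix.trace (((algebraMap O K π) ^ p)⁻¹ •
          (q - algebraMap O K c • (1 : Matrix (Fin 2) (Fin 2) K))) ∈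
        Set.range (algebraMap O K) ∧
      Matrix.det (((algebraMap O K π) ^ p)⁻¹ •
          (q - algebraMap O K c • (1 : Matrix (Fin 2) (Fin 2) K))) ∈
        Set.range (algebraMap O K)}, p ≤ e) ∧
    ((e ∈ {p : ℕ | ∃ c : O,
      Matrix.trace (((algebraMap O K π) ^ p)⁻¹ •
          (q - algebraMap O K c • (1 : Matrix (Fin 2) (Fin 2) K))) ∈
        Set.range (algebraMap O K) ∧
      Matrix.det (((algebraMap O K π) ^ p)⁻¹ •
          (q - algebraMap O K c • (1 : Matrix (Fin 2) (Fin 2) K))) ∈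
        Set.range (algebraMap O K)}) ↔
      (IsSquare (algebraMap O K a) ∨
        (⨅ x : O, Ideal.span {a - x ^ 2}) = Ideal.span {(2 : O) ^ 2})) :=
  stmt_11_general O K π hπ e he q htr a ha hq2
end

section
/- Let ε₁, ε₂ ∈ M₂(k) be nonzero nilpotent matrices over a nonarchimedean local field k with uniformizer π, satisfying ε₁ε₂ + ε₂ε₁ = π²·I. Then for a natural number t, there exists a maximal order (an O-lattice subring conjugate to M₂(O)) containing both ε₁ and ε₂/π^t if and only if t ≤ 2. -/
/-!
Conjugation preserves the relation: for `A = g⁻¹ ε₁ g` and `B = g⁻¹ (π⁻ᵗ ε₂) g` one still has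
`A B + B A = π^(2-t)·I`, so if `A` and `B` are integral then `π^(2-t) ∈ O`, i.e. `t ≤ 2`.
Conversely, pick `v₂ = ε₂ u ≠ 0` and put `v₁ = ε₁ v₂`; then `ε₁ : v₂ ↦ v₁ ↦ 0` and
`ε₂ : v₁ ↦ π² v₂ ↦ 0`, so in the basis `(v₁, v₂)` the two matrices become `[[0,1],[0,0]]` and
`[[0,0],[π²,0]]`, and `π⁻ᵗ ε₂` is integral there as soon as `t ≤ 2`.
-/

section

open Matrix

theorem Units.conj_mul_conj {A : Type*} [Monoid A] (g : Aˣ) (x y : A) :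
    ↑g⁻¹ * x * ↑g * (↑g⁻¹ * y * ↑g) = ↑g⁻¹ * (x * y) * ↑g := by
  simp [mul_assoc]

theorem Units.conj_anticomm_eq_smul_one {K A : Type*} [CommSemiring K] [Ring A] [Algebra K A]
    (g : Aˣ) {x y : A} {c : K} (h : x * y + y * x = c • 1) :
    ↑g⁻¹ * x * ↑g * (↑g⁻¹ * y * ↑g) + ↑g⁻¹ * y * ↑g * (↑g⁻¹ * x * ↑g) = c • 1 := by
  rw [g.conj_mul_conj, g.conj_mul_conj, ← add_mul, ← mul_add, h, mul_smul_comm, mul_one,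
    smul_mul_assoc, Units.inv_mul]

theorem Matrix.mem_of_anticomm_eq_smul_one {n R : Type*} [Fintype n] [DecidableEq n] [Ring R]
    (S : Subring R) {A B : Matrix n n R} (hA : ∀ i j, A i j ∈ S) (hB : ∀ i j, B i j ∈ S)
    {c : R} (h : A * B + B * A = c • 1) (i : n) : c ∈ S := by
  have hc : (A * B + B * A) i i = c := by
    simp only [h, smul_apply, one_apply_eq, smul_eq_mul, mul_one]
  rw [← hc, add_apply, mul_apply, mul_apply]
  exact S.add_mem (S.sum_mem fun k _ => S.mul_mem (hA i k) (hB k i))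
    (S.sum_mem fun k _ => S.mul_mem (hB i k) (hA k i))

theorem inv_pow_mul_pow_mem_range_iff {O K : Type*} [CommRing O] [IsDomain O] [Field K]
    [Algebra O K] (hinj : Function.Injective (algebraMap O K)) {a : O} (ha₀ : a ≠ 0)
    (ha : ¬IsUnit a) {m n : ℕ} :
    (algebraMap O K a ^ n)⁻¹ * algebraMap O K a ^ m ∈ Set.range (algebraMap O K) ↔ n ≤ m := by
  have ha₀' : algebraMap O K a ≠ 0 := (map_ne_zero_iff _ hinj).mpr ha₀
  constructor
  · rintro ⟨x, hx⟩
    rw [← pow_dvd_pow_iff ha₀ ha]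
    refine ⟨x, hinj ?_⟩
    rw [map_mul, map_pow, map_pow, hx, mul_inv_cancel_left₀ (pow_ne_zero n ha₀')]
  · intro h
    exact ⟨a ^ (m - n), by rw [map_pow, pow_sub₀ _ ha₀' h, mul_comm]⟩

variable {K : Type*} [Field K]

theorem Matrix.mul_transpose_of_pair (A : Matrix (Fin 2) (Fin 2) K) (v w : Fin 2 → K) :
    A * (of ![v, w])ᵀ = (of ![A *ᵥ v, A *ᵥ w])ᵀ := by
  ext i j
  fin_cases j <;> rfl

theorem Matrix.exists_conj_eq_of_anticomm {ε₁ ε₂ : Matrix (Fin 2) (Fin 2) K}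
    (h₁ : ε₁ * ε₁ = 0) (h₂ : ε₂ ≠ 0) (h₂' : ε₂ * ε₂ = 0) {c : K} (hc : c ≠ 0)
    (h : ε₁ * ε₂ + ε₂ * ε₁ = c • 1) :
    ∃ g : (Matrix (Fin 2) (Fin 2) K)ˣ,
      (↑g⁻¹ : Matrix (Fin 2) (Fin 2) K) * ε₁ * (↑g : Matrix (Fin 2) (Fin 2) K) = !![0, 1; 0, 0] ∧
      (↑g⁻¹ : Matrix (Fin 2) (Fin 2) K) * ε₂ * (↑g : Matrix (Fin 2) (Fin 2) K) =
        !![0, 0; c, 0] := by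
  obtain ⟨u, hu⟩ : ∃ u, ε₂ *ᵥ u ≠ 0 := by
    by_contra! hu
    exact h₂ (ext_iff_mulVec.mpr fun u => by rw [hu, zero_mulVec])
  set v₂ := ε₂ *ᵥ u
  set v₁ := ε₁ *ᵥ v₂
  have h₁v₁ : ε₁ *ᵥ v₁ = 0 := by rw [mulVec_mulVec, h₁, zero_mulVec]
  have h₂v₂ : ε₂ *ᵥ v₂ = 0 := by rw [mulVec_mulVec, h₂', zero_mulVec]
  have h₂v₁ : ε₂ *ᵥ v₁ = c • v₂ := by
    rw [mulVec_mulVec, eq_sub_of_add_eq' h, sub_mulVec, smul_mulVec, one_mulVec,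
      ← mulVec_mulVec, h₂v₂, mulVec_zero, sub_zero]
  have hv₁ : v₁ ≠ 0 := fun h0 => hu (by simpa [h0, hc] using h₂v₁.symm)
  have hind : LinearIndependent K ![v₁, v₂] := by
    refine (LinearIndependent.pair_iff' hv₁).mpr fun a ha => hv₁ ?_
    change ε₁ *ᵥ v₂ = 0
    rw [← ha, mulVec_smul, h₁v₁, smul_zero]
  have hM : IsUnit (of ![v₁, v₂])ᵀ := linearIndependent_cols_iff_isUnit.mp hind
  refine ⟨hM.unit, ?_, ?_⟩
  · rw [mul_assoc, Units.inv_mul_eq_iff_eq_mul, IsUnit.unit_spec, mul_transpose_of_pair, h₁v₁]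
    ext i j
    fin_cases j <;> simp [mul_apply, v₁]
  · rw [mul_assoc, Units.inv_mul_eq_iff_eq_mul, IsUnit.unit_spec, mul_transpose_of_pair, h₂v₁,
      h₂v₂]
    ext i j
    fin_cases j <;> simp [mul_apply, mul_comm]

end

theorem stmt_14_general (O : Type*) [CommRing O] [IsDomain O]
    (K : Type*) [Field K] [Algebra O K] [IsFractionRing O K]
    (π : O) (hπ : Irreducible π)
    (ε₁ ε₂ : Matrix (Fin 2) (Fin 2) K)
    (h1n : ε₁ * ε₁ = 0) (h2 : ε₂ ≠ 0) (h2n : ε₂ * ε₂ = 0)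
    (hrel : ε₁ * ε₂ + ε₂ * ε₁ = (algebraMap O K π) ^ 2 • (1 : Matrix (Fin 2) (Fin 2) K))
    (t : ℕ) :
    (∃ g : Matrix.GeneralLinearGroup (Fin 2) K,
      (∀ i j : Fin 2, ((↑g⁻¹ : Matrix (Fin 2) (Fin 2) K) * ε₁ * (↑g : Matrix (Fin 2) (Fin 2) K)) i j
          ∈ Set.range (algebraMap O K)) ∧
      (∀ i j : Fin 2, ((↑g⁻¹ : Matrix (Fin 2) (Fin 2) K) * (((algebraMap O K π) ^ t)⁻¹ • ε₂) *
          (↑g : Matrix (Fin 2) (Fin 2) K)) i j ∈ Set.range (algebraMap O K))) ↔ t ≤ 2 := by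
  have hinj := IsFractionRing.injective O K
  have hmem_iff := inv_pow_mul_pow_mem_range_iff hinj hπ.ne_zero hπ.not_isUnit (m := 2) (n := t)
  set p := algebraMap O K π
  constructor
  · rintro ⟨g, hg₁, hg₂⟩
    have hrel' : ε₁ * ((p ^ t)⁻¹ • ε₂) + (p ^ t)⁻¹ • ε₂ * ε₁ = ((p ^ t)⁻¹ * p ^ 2) • 1 := by
      rw [mul_smul_comm, smul_mul_assoc, ← smul_add, hrel, smul_smul]
    exact hmem_iff.mp <| Matrix.mem_of_anticomm_eq_smul_one (algebraMap O K).range hg₁ hg₂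
      (g.conj_anticomm_eq_smul_one hrel') 0
  · intro ht
    have hp : p ^ 2 ≠ 0 := pow_ne_zero 2 ((map_ne_zero_iff _ hinj).mpr hπ.ne_zero)
    obtain ⟨g, hg₁, hg₂⟩ := Matrix.exists_conj_eq_of_anticomm h1n h2 h2n hp hrel
    refine ⟨g, fun i j => ?_, fun i j => ?_⟩
    · rw [hg₁]
      fin_cases i <;> fin_cases j <;> simp
    · rw [mul_smul_comm, smul_mul_assoc, hg₂]
      fin_cases i <;> fin_cases j <;> simp [hmem_iff.mpr ht]

/-- For nonzero nilpotents `ε₁, ε₂ ∈ M₂(k)` with `ε₁ε₂ + ε₂ε₁ = π²·I`, there is a maximal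
order containing `ε₁` and `ε₂/π^t` iff `t ≤ 2`. -/
theorem stmt_14 (O : Type*) [CommRing O] [IsDomain O] [IsDiscreteValuationRing O]
    [IsAdicComplete (IsLocalRing.maximalIdeal O) O] [Finite (IsLocalRing.ResidueField O)]
    (K : Type*) [Field K] [Algebra O K] [IsFractionRing O K]
    (π : O) (hπ : Irreducible π)
    (ε₁ ε₂ : Matrix (Fin 2) (Fin 2) K)
    (h1 : ε₁ ≠ 0) (h1n : ε₁ * ε₁ = 0) (h2 : ε₂ ≠ 0) (h2n : ε₂ * ε₂ = 0)
    (hrel : ε₁ * ε₂ + ε₂ * ε₁ = (algebraMap O K π) ^ 2 • (1 : Matrix (Fin 2) (Fin 2) K))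
    (t : ℕ) :
    (∃ g : Matrix.GeneralLinearGroup (Fin 2) K,
      (∀ i j : Fin 2, ((↑g⁻¹ : Matrix (Fin 2) (Fin 2) K) * ε₁ * (↑g : Matrix (Fin 2) (Fin 2) K)) i j
          ∈ Set.range (algebraMap O K)) ∧
      (∀ i j : Fin 2, ((↑g⁻¹ : Matrix (Fin 2) (Fin 2) K) * (((algebraMap O K π) ^ t)⁻¹ • ε₂) *
          (↑g : Matrix (Fin 2) (Fin 2) K)) i j ∈ Set.range (algebraMap O K))) ↔ t ≤ 2 :=
  stmt_14_general O K π hπ ε₁ ε₂ h1n h2 h2n hrel t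
end

section
/- Let q be a trace-zero matrix in M₂(k) over a nonarchimedean local field k, whose square q² = a·I with a ∈ O a uniformizing parameter (v(a) = 1). Then q is contained in exactly two maximal orders of M₂(k), and these two maximal orders are adjacent vertices of the Bruhat–Tits tree (their intersection is an Eichler order of level 1). -/
/-- A maximal order of `M₂(K)`: a conjugate `g·M₂(O)·g⁻¹` of `M₂(O)`, as a set. -/
def IsMaximalOrderM2 (O : Type*) [CommRing O] (K : Type*) [Field K] [Algebra O K]
    (D : Set (Matrix (Fin 2) (Fin 2) K)) : Prop :=
  ∃ g : Matrix.GeneralLinearGroup (Fin 2) K,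
    D = {m | ∀ i j : Fin 2,
      ((↑g⁻¹ : Matrix (Fin 2) (Fin 2) K) * m * (↑g : Matrix (Fin 2) (Fin 2) K)) i j
        ∈ Set.range (algebraMap O K)}

open Matrix

/-!
Since `a` is not a square in `K`, `q` has a cyclic vector, so up to conjugation `q` is
`S = !![0, 1; a, 0]` and we must find the maximal orders `g M₂(O) g⁻¹` containing `S`. If `M = g⁻¹ S g` is integral then `M² = a`, so an off-diagonal
entry of `M` is a unit (otherwise `a ∈ 𝔪²`), and then `M` is already conjugate to `S` under
`GL₂(O)`. This reduces `g` to the centralizer of `S`, whose elements are `p + r S`; comparing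
`v(p)` with `v(r)` puts them in `K^× GL₂(O)` or in `S K^× GL₂(O)`. So the orders are exactly
`M₂(O)` and `S M₂(O) S⁻¹`, and their intersection is read off from
`S⁻¹ N S = !![N₁₁, N₁₀ / a; a N₀₁, N₀₀]`.
-/

namespace MaximalOrderM2

local notation "M₂(" R ")" => Matrix (Fin 2) (Fin 2) R

lemma forall_mem_range_iff_mem_range_mapMatrix {R S n : Type*} [Ring R] [Ring S]
    [Fintype n] [DecidableEq n] (f : R →+* S) (N : Matrix n n S) :
    (∀ i j, N i j ∈ Set.range f) ↔ N ∈ f.mapMatrix.range := by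
  constructor
  · intro h
    choose N₀ hN₀ using h
    exact ⟨Matrix.of N₀, by ext i j; exact hN₀ i j⟩
  · rintro ⟨N₀, rfl⟩ i j
    exact ⟨N₀ i j, rfl⟩

section ConjOrder

variable {O K : Type*} [CommRing O] [CommRing K] [Algebra O K]

variable (O K) in
abbrev integralMatrices : Subring M₂(K) := (algebraMap O K).mapMatrix.range

variable (O) in
/-- The maximal order `g M₂(O) g⁻¹`, in the form used by `IsMaximalOrderM2`. -/
def conjOrder (g : GL (Fin 2) K) : Set M₂(K) :=
  {m | ∀ i j : Fin 2, ((↑g⁻¹ : M₂(K)) * m * (↑g : M₂(K))) i j ∈ Set.range (algebraMap O K)}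

lemma mem_conjOrder_iff {g : GL (Fin 2) K} {m : M₂(K)} :
    m ∈ conjOrder O g ↔ (↑g⁻¹ : M₂(K)) * m * (↑g : M₂(K)) ∈ integralMatrices O K :=
  forall_mem_range_iff_mem_range_mapMatrix _ _

lemma mem_conjOrder_one {m : M₂(K)} :
    m ∈ conjOrder O 1 ↔ ∀ i j, m i j ∈ Set.range (algebraMap O K) := by
  simp [conjOrder]

lemma mem_conjOrder_mul {g h : GL (Fin 2) K} {m : M₂(K)} :
    m ∈ conjOrder O (g * h) ↔ (↑g⁻¹ : M₂(K)) * m * (↑g : M₂(K)) ∈ conjOrder O h := by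
  simp only [conjOrder, Set.mem_ofPred_eq, _root_.mul_inv_rev, Units.val_mul, mul_assoc]

lemma conjOrder_mul_left_inj (g : GL (Fin 2) K) {h h' : GL (Fin 2) K} :
    conjOrder O (g * h) = conjOrder O (g * h') ↔ conjOrder O h = conjOrder O h' := by
  refine ⟨fun H => Set.ext fun N => ?_,
    fun H => Set.ext fun m => by rw [mem_conjOrder_mul, mem_conjOrder_mul, H]⟩
  simpa [mem_conjOrder_mul, mul_assoc] using
    Set.ext_iff.mp H ((↑g : M₂(K)) * N * (↑g⁻¹ : M₂(K)))

lemma conjOrder_map (u : GL (Fin 2) O) :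
    conjOrder O (GeneralLinearGroup.map (algebraMap O K) u) = conjOrder O 1 := by
  have hconj : ∀ (v : GL (Fin 2) O) (N : M₂(K)), N ∈ integralMatrices O K →
      (↑(GeneralLinearGroup.map (algebraMap O K) v)⁻¹ : M₂(K)) * N *
        (↑(GeneralLinearGroup.map (algebraMap O K) v) : M₂(K)) ∈ integralMatrices O K := by
    intro v N hN
    rw [← GeneralLinearGroup.map_inv]
    exact mul_mem (mul_mem ⟨_, rfl⟩ hN) ⟨_, rfl⟩
  ext N
  rw [mem_conjOrder_iff, mem_conjOrder_iff, inv_one, Units.val_one, one_mul, mul_one]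
  refine ⟨fun hN => ?_, hconj u N⟩
  convert hconj u⁻¹ _ hN using 1
  rw [GeneralLinearGroup.map_inv, inv_inv]
  simp only [mul_assoc, Units.mul_inv, mul_one, Units.mul_inv_cancel_left]

lemma conjOrder_mul_map (g : GL (Fin 2) K) (u : GL (Fin 2) O) :
    conjOrder O (g * GeneralLinearGroup.map (algebraMap O K) u) = conjOrder O g := by
  conv_rhs => rw [← mul_one g]
  exact (conjOrder_mul_left_inj g).2 (conjOrder_map u)

end ConjOrder

lemma conjOrder_eq_of_coe_eq_smul {O K : Type*} [CommRing O] [Field K] [Algebra O K]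
    {g h : GL (Fin 2) K} {s : K} (hgh : (↑h : M₂(K)) = s • ↑g) :
    conjOrder O h = conjOrder O g := by
  have hs : s ≠ 0 := by
    rintro rfl
    simp at hgh
  have hinv : (↑h⁻¹ : M₂(K)) = s⁻¹ • ↑g⁻¹ :=
    Units.inv_eq_of_mul_eq_one_right (by
      rw [hgh, smul_mul_smul_comm, mul_inv_cancel₀ hs, Units.mul_inv, one_smul])
  ext m
  simp only [conjOrder, Set.mem_ofPred_eq, hinv, hgh, smul_mul_assoc, mul_smul_comm, smul_smul,
    mul_inv_cancel₀ hs, one_smul]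

section SqrtMat

variable {R : Type*} [CommRing R]

def sqrtMat (c : R) : M₂(R) := !![0, 1; c, 0]

lemma sqrtMat_mul_self (c : R) : sqrtMat c * sqrtMat c = c • 1 := by
  ext i j
  fin_cases i <;> fin_cases j <;> simp [sqrtMat]

lemma sqrtMat_map {S : Type*} [CommRing S] (f : R →+* S) (c : R) :
    (sqrtMat c).map f = sqrtMat (f c) := by
  ext i j
  fin_cases i <;> fin_cases j <;> simp [sqrtMat]

lemma mul_self_add_mul_eq_of_mul_self_eq_smul {q : M₂(R)} {c : R} (hq : q * q = c • 1) :
    q 0 0 * q 0 0 + q 0 1 * q 1 0 = c := by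
  simpa [Matrix.mul_apply, Fin.sum_univ_two] using congr_fun (congr_fun hq 0) 0

lemma exists_mul_eq_mul_sqrtMat {q : M₂(R)} {c : R} (hq : q * q = c • 1)
    (hu : IsUnit (q 0 1) ∨ IsUnit (q 1 0)) :
    ∃ g : GL (Fin 2) R, q * (↑g : M₂(R)) = (↑g : M₂(R)) * sqrtMat c := by
  have e : ∀ i j, q i 0 * q 0 j + q i 1 * q 1 j = if i = j then c else 0 := fun i j => by
    simpa [Matrix.mul_apply, Fin.sum_univ_two, Matrix.one_apply] using congr_fun (congr_fun hq i) j
  rcases hu with hy | hz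
  · refine ⟨GeneralLinearGroup.mk'' !![q 0 1, 0; q 1 1, 1] (by simpa using hy), ?_⟩
    ext i j
    have eij := e i 1
    fin_cases i <;> fin_cases j <;> simp [sqrtMat, Matrix.mul_apply, Fin.sum_univ_two] <;>
      simpa using eij
  · refine ⟨GeneralLinearGroup.mk'' !![q 0 0, 1; q 1 0, 0] (by simpa using hz.neg), ?_⟩
    ext i j
    have eij := e i 0
    fin_cases i <;> fin_cases j <;> simp [sqrtMat, Matrix.mul_apply, Fin.sum_univ_two] <;>
      simpa using eij

lemma eq_of_mul_sqrtMat_eq_sqrtMat_mul {Z : M₂(R)} {c : R} (h : Z * sqrtMat c = sqrtMat c * Z) :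
    Z = !![Z 0 0, Z 0 1; c * Z 0 1, Z 0 0] := by
  have h00 := congr_fun (congr_fun h 0) 0
  have h01 := congr_fun (congr_fun h 0) 1
  simp [sqrtMat, Matrix.mul_apply, Fin.sum_univ_two] at h00 h01
  rw [Matrix.eta_fin_two Z, ← h00, h01, mul_comm]
  simp

lemma sqrtMat_mem_conjOrder_one {O K : Type*} [CommRing O] [CommRing K] [Algebra O K] (c : O) :
    sqrtMat (algebraMap O K c) ∈ conjOrder O (1 : GL (Fin 2) K) := by
  rw [mem_conjOrder_iff, inv_one, Units.val_one, one_mul, mul_one]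
  exact ⟨sqrtMat c, sqrtMat_map _ c⟩

end SqrtMat

section FractionRing

variable {O K : Type*} [CommRing O] [Field K] [Algebra O K] [IsFractionRing O K] {a : O}

lemma algebraMap_ne_zero_of_irreducible (ha : Irreducible a) : algebraMap O K a ≠ 0 :=
  (map_ne_zero_iff _ (IsFractionRing.injective O K)).mpr ha.ne_zero

variable (K) in
def sqrtMatGL (ha : Irreducible a) : GL (Fin 2) K where
  val := sqrtMat (algebraMap O K a)
  inv := (algebraMap O K a)⁻¹ • sqrtMat (algebraMap O K a)
  val_inv := by
    rw [mul_smul_comm, sqrtMat_mul_self, smul_smul,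
      inv_mul_cancel₀ (algebraMap_ne_zero_of_irreducible ha), one_smul]
  inv_val := by
    rw [smul_mul_assoc, sqrtMat_mul_self, smul_smul,
      inv_mul_cancel₀ (algebraMap_ne_zero_of_irreducible ha), one_smul]

@[simp]
lemma coe_sqrtMatGL (ha : Irreducible a) :
    (↑(sqrtMatGL K ha) : M₂(K)) = sqrtMat (algebraMap O K a) := rfl

lemma sqrtMatGL_inv_mul_mul (ha : Irreducible a) (N : M₂(K)) :
    (↑(sqrtMatGL K ha)⁻¹ : M₂(K)) * N * (↑(sqrtMatGL K ha) : M₂(K)) =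
      !![N 1 1, N 1 0 / algebraMap O K a; algebraMap O K a * N 0 1, N 0 0] := by
  have hc := algebraMap_ne_zero_of_irreducible (K := K) ha
  change (algebraMap O K a)⁻¹ • sqrtMat (algebraMap O K a) * N * sqrtMat (algebraMap O K a) = _
  rw [smul_mul_assoc, smul_mul_assoc, Matrix.eta_fin_two N, sqrtMat, Matrix.mul_fin_two,
    Matrix.mul_fin_two]
  ext i j
  fin_cases i <;> fin_cases j <;> simp <;> field_simp

lemma sqrtMat_mem_conjOrder_sqrtMatGL (ha : Irreducible a) :
    sqrtMat (algebraMap O K a) ∈ conjOrder O (sqrtMatGL K ha) := by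
  rw [mem_conjOrder_iff, ← coe_sqrtMatGL ha, Units.inv_mul, one_mul]
  exact ⟨sqrtMat a, sqrtMat_map _ a⟩

lemma conjOrder_one_ne_sqrtMatGL (ha : Irreducible a) :
    conjOrder O (1 : GL (Fin 2) K) ≠ conjOrder O (sqrtMatGL K ha) := by
  intro h
  have hN : !![0, 0; 1, 0] ∈ conjOrder O (1 : GL (Fin 2) K) := by
    rw [mem_conjOrder_one]
    intro i j
    fin_cases i <;> fin_cases j <;> simp
  rw [h, conjOrder, Set.mem_ofPred_eq, sqrtMatGL_inv_mul_mul] at hN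
  obtain ⟨b, hb⟩ := hN 0 1
  refine ha.not_isUnit (IsUnit.of_mul_eq_one b (IsFractionRing.injective O K ?_))
  simp only [map_mul, hb, map_one]
  simp [algebraMap_ne_zero_of_irreducible ha]

lemma conjOrder_one_inter_sqrtMatGL (ha : Irreducible a) :
    conjOrder O (1 : GL (Fin 2) K) ∩ conjOrder O (sqrtMatGL K ha) =
      {N | (∀ i j, N i j ∈ Set.range (algebraMap O K)) ∧
        ∃ c : O, N 1 0 = algebraMap O K (a * c)} := by
  have ha0 := algebraMap_ne_zero_of_irreducible (K := K) ha
  ext N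
  rw [Set.mem_inter_iff, mem_conjOrder_one]
  simp only [conjOrder, Set.mem_ofPred_eq, sqrtMatGL_inv_mul_mul, Fin.forall_fin_two, of_apply,
    cons_val', cons_val_zero, cons_val_one, empty_val', cons_val_fin_one]
  refine and_congr_right fun ⟨⟨h00, h01⟩, _, h11⟩ => ?_
  have ha01 : algebraMap O K a * N 0 1 ∈ Set.range (algebraMap O K) := by
    obtain ⟨y, hy⟩ := h01
    exact ⟨a * y, by rw [map_mul, hy]⟩
  simp only [h00, h11, ha01, true_and, and_true]
  exact ⟨fun ⟨c, hc⟩ => ⟨c, by rw [map_mul, hc]; field_simp⟩,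
    fun ⟨c, hc⟩ => ⟨c, by rw [hc, map_mul]; field_simp⟩⟩

end FractionRing

section DVR

variable {O : Type*} [CommRing O] [IsDomain O] [IsDiscreteValuationRing O] {a : O}

lemma irreducible_dvd_of_not_isUnit (ha : Irreducible a) {t : O} (ht : ¬IsUnit t) : a ∣ t := by
  rw [← Ideal.mem_span_singleton, ← (IsDiscreteValuationRing.irreducible_iff_uniformizer a).mp ha]
  exact (IsLocalRing.mem_maximalIdeal _).mpr ht

lemma isUnit_or_isUnit_of_mul_self_add_mul_eq (ha : Irreducible a) {x y z : O}
    (h : x * x + y * z = a) : IsUnit y ∨ IsUnit z := by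
  by_contra! hyz
  obtain ⟨y', rfl⟩ := irreducible_dvd_of_not_isUnit ha hyz.1
  obtain ⟨z', rfl⟩ := irreducible_dvd_of_not_isUnit ha hyz.2
  have hx : ¬IsUnit x := fun hx =>
    ha.not_isUnit (isUnit_of_dvd_unit ⟨1 - y' * a * z', by linear_combination h⟩ (hx.mul hx))
  obtain ⟨x', rfl⟩ := irreducible_dvd_of_not_isUnit ha hx
  have : a * (x' * x' + y' * z') = 1 := mul_left_cancel₀ ha.ne_zero (by linear_combination h)
  exact ha.not_isUnit (IsUnit.of_mul_eq_one _ this)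

variable {K : Type*} [Field K] [Algebra O K] [IsFractionRing O K]

lemma mul_self_ne_algebraMap (ha : Irreducible a) (t : K) : t * t ≠ algebraMap O K a := by
  intro h
  rcases ValuationRing.isInteger_or_isInteger O t with ⟨b, rfl⟩ | ⟨b, hb⟩
  · rw [← map_mul] at h
    have hbb := IsFractionRing.injective O K h
    obtain hb | hb := ha.isUnit_or_isUnit hbb.symm <;> exact ha.not_isUnit (hbb ▸ hb.mul hb)
  · have ht : t ≠ 0 := by
      rintro rfl
      exact ha.ne_zero (IsFractionRing.injective O K (by simpa using h.symm))
    refine ha.not_isUnit (IsUnit.of_mul_eq_one (b * b) (IsFractionRing.injective O K ?_))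
    rw [map_mul, map_mul, hb, ← h, map_one]
    field_simp

lemma isUnit_det_one_add_smul_sqrtMat (ha : Irreducible a) (e : O) :
    IsUnit (1 + e • sqrtMat a).det := by
  rw [Matrix.det_fin_two]
  simp only [sqrtMat]
  simp
  exact IsLocalRing.isUnit_one_sub_self_of_mem_nonunits _
    fun hu => ha.not_isUnit (isUnit_of_mul_isUnit_right (isUnit_of_mul_isUnit_right hu))

lemma exists_eq_smul_or_eq_sqrtMat_mul_smul (ha : Irreducible a) (p r : K) :
    ∃ (u : GL (Fin 2) O) (s : K),
      !![p, r; algebraMap O K a * r, p] = s • (↑u : M₂(O)).map (algebraMap O K) ∨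
      !![p, r; algebraMap O K a * r, p] =
        sqrtMat (algebraMap O K a) * s • (↑u : M₂(O)).map (algebraMap O K) := by
  by_cases hp : p = 0
  · refine ⟨1, r, Or.inr ?_⟩
    ext i j
    fin_cases i <;> fin_cases j <;> simp [sqrtMat, hp, Matrix.mul_apply, Fin.sum_univ_two]
  by_cases hrp : IsLocalization.IsInteger O (r / p)
  · obtain ⟨e, he⟩ := hrp
    refine ⟨GeneralLinearGroup.mk'' _ (isUnit_det_one_add_smul_sqrtMat ha e), p, Or.inl ?_⟩
    ext i j
    fin_cases i <;> fin_cases j <;> simp [sqrtMat, he] <;> field_simp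
  obtain ⟨d, hd⟩ := (ValuationRing.isInteger_or_isInteger O (r / p)).resolve_left hrp
  have hr : r ≠ 0 := by
    rintro rfl
    exact hrp ⟨0, by simp⟩
  have hdu : ¬IsUnit d := by
    rintro ⟨d, rfl⟩
    exact hrp ⟨↑d⁻¹, by rw [map_units_inv, hd, inv_inv]⟩
  obtain ⟨e, rfl⟩ := irreducible_dvd_of_not_isUnit ha hdu
  refine ⟨GeneralLinearGroup.mk'' _ (isUnit_det_one_add_smul_sqrtMat ha e), r, Or.inr ?_⟩
  rw [map_mul, inv_div, eq_div_iff hr] at hd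
  rw [← hd]
  ext i j
  fin_cases i <;> fin_cases j <;> simp [sqrtMat, Matrix.mul_apply, Fin.sum_univ_two] <;> ring

lemma conjOrder_eq_of_commute_sqrtMat (ha : Irreducible a) {Z : GL (Fin 2) K}
    (hZ : (↑Z : M₂(K)) * sqrtMat (algebraMap O K a) =
      sqrtMat (algebraMap O K a) * (↑Z : M₂(K))) :
    conjOrder O Z = conjOrder O 1 ∨ conjOrder O Z = conjOrder O (sqrtMatGL K ha) := by
  obtain ⟨u, s, h | h⟩ :=
    exists_eq_smul_or_eq_sqrtMat_mul_smul ha ((↑Z : M₂(K)) 0 0) ((↑Z : M₂(K)) 0 1)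
  · left
    rw [← eq_of_mul_sqrtMat_eq_sqrtMat_mul hZ] at h
    rw [conjOrder_eq_of_coe_eq_smul (g := GeneralLinearGroup.map (algebraMap O K) u) h,
      conjOrder_map]
  · right
    rw [← eq_of_mul_sqrtMat_eq_sqrtMat_mul hZ, mul_smul_comm] at h
    rw [conjOrder_eq_of_coe_eq_smul
      (g := sqrtMatGL K ha * GeneralLinearGroup.map (algebraMap O K) u) h, conjOrder_mul_map]

theorem conjOrder_eq_of_sqrtMat_mem (ha : Irreducible a) {g : GL (Fin 2) K}
    (hg : sqrtMat (algebraMap O K a) ∈ conjOrder O g) :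
    conjOrder O g = conjOrder O 1 ∨ conjOrder O g = conjOrder O (sqrtMatGL K ha) := by
  obtain ⟨M, hM⟩ := mem_conjOrder_iff.mp hg
  rw [RingHom.mapMatrix_apply] at hM
  have hMM : M * M = a • 1 := by
    apply Matrix.map_injective (IsFractionRing.injective O K)
    dsimp only
    rw [Matrix.map_mul, hM]
    simp only [mul_assoc, Units.mul_inv_cancel_left]
    rw [← mul_assoc (sqrtMat _), sqrtMat_mul_self, smul_mul_assoc, one_mul, mul_smul_comm,
      Units.inv_mul]
    ext i j
    by_cases hij : i = j <;> simp [hij]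
  obtain ⟨u, hu⟩ := exists_mul_eq_mul_sqrtMat hMM
    (isUnit_or_isUnit_of_mul_self_add_mul_eq ha (mul_self_add_mul_eq_of_mul_self_eq_smul hMM))
  have hZ : (↑(g * GeneralLinearGroup.map (algebraMap O K) u) : M₂(K)) *
      sqrtMat (algebraMap O K a) = sqrtMat (algebraMap O K a) *
        (↑(g * GeneralLinearGroup.map (algebraMap O K) u) : M₂(K)) := by
    change (↑g : M₂(K)) * (↑u : M₂(O)).map (algebraMap O K) * sqrtMat (algebraMap O K a) =
      sqrtMat (algebraMap O K a) * ((↑g : M₂(K)) * (↑u : M₂(O)).map (algebraMap O K))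
    calc (↑g : M₂(K)) * (↑u : M₂(O)).map (algebraMap O K) * sqrtMat (algebraMap O K a)
        = ↑g * ((↑u : M₂(O)) * sqrtMat a).map (algebraMap O K) := by
          rw [Matrix.map_mul, sqrtMat_map, mul_assoc]
      _ = ↑g * (M * (↑u : M₂(O))).map (algebraMap O K) := by rw [hu]
      _ = sqrtMat (algebraMap O K a) * (↑g * (↑u : M₂(O)).map (algebraMap O K)) := by
        rw [Matrix.map_mul, hM]
        simp only [mul_assoc, Units.mul_inv_cancel_left]
  rw [← conjOrder_mul_map g u]
  exact conjOrder_eq_of_commute_sqrtMat ha hZ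

lemma exists_conj_eq_sqrtMat (ha : Irreducible a) {q : M₂(K)}
    (hq : q * q = algebraMap O K a • 1) :
    ∃ g : GL (Fin 2) K, (↑g⁻¹ : M₂(K)) * q * (↑g : M₂(K)) = sqrtMat (algebraMap O K a) := by
  have hu : IsUnit (q 0 1) ∨ IsUnit (q 1 0) := by
    simp only [isUnit_iff_ne_zero]
    by_contra! h
    apply mul_self_ne_algebraMap ha (q 0 0)
    simpa [h.1] using mul_self_add_mul_eq_of_mul_self_eq_smul hq
  obtain ⟨g, hg⟩ := exists_mul_eq_mul_sqrtMat hq hu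
  exact ⟨g, by rw [mul_assoc, hg, ← mul_assoc, Units.inv_mul, one_mul]⟩

end DVR

end MaximalOrderM2

open MaximalOrderM2

theorem stmt_16_general (O : Type*) [CommRing O] [IsDomain O] [IsDiscreteValuationRing O]
    (K : Type*) [Field K] [Algebra O K] [IsFractionRing O K]
    (q : Matrix (Fin 2) (Fin 2) K)
    (a : O) (ha : Irreducible a)
    (hq2 : q * q = algebraMap O K a • (1 : Matrix (Fin 2) (Fin 2) K)) :
    ∃ D D' : Set (Matrix (Fin 2) (Fin 2) K),
      IsMaximalOrderM2 O K D ∧ IsMaximalOrderM2 O K D' ∧ D ≠ D' ∧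
      q ∈ D ∧ q ∈ D' ∧
      (∀ E : Set (Matrix (Fin 2) (Fin 2) K), IsMaximalOrderM2 O K E → q ∈ E → E = D ∨ E = D') ∧
      ∃ g : Matrix.GeneralLinearGroup (Fin 2) K,
        D ∩ D' = {m | (∀ i j : Fin 2,
            ((↑g⁻¹ : Matrix (Fin 2) (Fin 2) K) * m * (↑g : Matrix (Fin 2) (Fin 2) K)) i j
              ∈ Set.range (algebraMap O K)) ∧
          ∃ c : O, ((↑g⁻¹ : Matrix (Fin 2) (Fin 2) K) * m * (↑g : Matrix (Fin 2) (Fin 2) K)) 1 0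
              = algebraMap O K (a * c)} := by
  obtain ⟨g, hg⟩ := exists_conj_eq_sqrtMat ha hq2
  have hq : ∀ h, q ∈ conjOrder O (g * h) ↔ sqrtMat (algebraMap O K a) ∈ conjOrder O h := by
    intro h
    rw [mem_conjOrder_mul, hg]
  refine ⟨conjOrder O (g * 1), conjOrder O (g * sqrtMatGL K ha), ⟨_, rfl⟩, ⟨_, rfl⟩,
    mt (conjOrder_mul_left_inj g).1 (conjOrder_one_ne_sqrtMatGL ha),
    (hq 1).2 (sqrtMat_mem_conjOrder_one a), (hq _).2 (sqrtMat_mem_conjOrder_sqrtMatGL ha),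
    ?_, g, ?_⟩
  · rintro E ⟨h, rfl⟩ hqE
    obtain ⟨h, rfl⟩ : ∃ h', h = g * h' := ⟨g⁻¹ * h, (mul_inv_cancel_left g h).symm⟩
    change conjOrder O (g * h) = _ ∨ conjOrder O (g * h) = _
    simp only [conjOrder_mul_left_inj]
    exact conjOrder_eq_of_sqrtMat_mem ha ((hq h).1 hqE)
  · ext m
    rw [Set.mem_inter_iff, mem_conjOrder_mul, mem_conjOrder_mul, ← Set.mem_inter_iff,
      conjOrder_one_inter_sqrtMatGL]
    rfl

/-- A trace-zero `q ∈ M₂(k)` with `q² = a·I`, `a` a uniformizer, lies in exactly two maximal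
orders, and these are adjacent in the Bruhat–Tits tree: their intersection is conjugate to
the standard Eichler order of level 1. -/
theorem stmt_16 (O : Type*) [CommRing O] [IsDomain O] [IsDiscreteValuationRing O]
    [IsAdicComplete (IsLocalRing.maximalIdeal O) O] [Finite (IsLocalRing.ResidueField O)]
    (K : Type*) [Field K] [Algebra O K] [IsFractionRing O K]
    (q : Matrix (Fin 2) (Fin 2) K) (htr : Matrix.trace q = 0)
    (a : O) (ha : Irreducible a)
    (hq2 : q * q = algebraMap O K a • (1 : Matrix (Fin 2) (Fin 2) K)) :
    ∃ D D' : Set (Matrix (Fin 2) (Fin 2) K),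
      IsMaximalOrderM2 O K D ∧ IsMaximalOrderM2 O K D' ∧ D ≠ D' ∧
      q ∈ D ∧ q ∈ D' ∧
      (∀ E : Set (Matrix (Fin 2) (Fin 2) K), IsMaximalOrderM2 O K E → q ∈ E → E = D ∨ E = D') ∧
      ∃ g : Matrix.GeneralLinearGroup (Fin 2) K,
        D ∩ D' = {m | (∀ i j : Fin 2,
            ((↑g⁻¹ : Matrix (Fin 2) (Fin 2) K) * m * (↑g : Matrix (Fin 2) (Fin 2) K)) i j
              ∈ Set.range (algebraMap O K)) ∧
          ∃ c : O, ((↑g⁻¹ : Matrix (Fin 2) (Fin 2) K) * m * (↑g : Matrix (Fin 2) (Fin 2) K)) 1 0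
              = algebraMap O K (a * c)} :=
  stmt_16_general O K q a ha hq2
end

section
/- Let k be a non-dyadic nonarchimedean local field (odd residue characteristic) with ring of integers O, and let i, j ∈ M₂(k) satisfy ij = −ji, i² = α·I, j² = β·I with α, β ∈ O^*. Then the O-order O[i,j] generated by i and j is maximal, i.e., it is contained in exactly one maximal order of M₂(k), namely itself (it equals a conjugate of M₂(O)). -/
open IsLocalRing

section Hensel

open Polynomial

variable {O : Type*} [CommRing O] [IsLocalRing O] [HenselianRing O (maximalIdeal O)]

theorem IsLocalRing.isSquare_of_isSquare_residue (h2 : IsUnit (2 : O)) {u : O} (hu : IsUnit u)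
    (h : IsSquare (residue O u)) : IsSquare u := by
  obtain ⟨a', ha'⟩ := h
  obtain ⟨a, rfl⟩ := residue_surjective a'
  have ha : IsUnit a := by
    rw [← residue_ne_zero_iff_isUnit]
    rintro h0
    rw [h0, mul_zero, residue_eq_zero_iff] at ha'
    exact (mem_maximalIdeal _).1 ha' hu
  have hroot : (X ^ 2 - C u : O[X]).eval a ∈ maximalIdeal O := by
    rw [← residue_eq_zero_iff]
    simp [ha', sq]
  have hderiv : IsUnit (Ideal.Quotient.mk (maximalIdeal O)
      ((X ^ 2 - C u : O[X]).derivative.eval a)) := by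
    have : (X ^ 2 - C u : O[X]).derivative.eval a = 2 * a := by simp [one_add_one_eq_two]
    rw [this]
    exact (h2.mul ha).map _
  obtain ⟨r, hr, -⟩ :=
    HenselianRing.is_henselian _ (monic_X_pow_sub_C u two_ne_zero) a hroot hderiv
  exact ⟨r, by simpa [sub_eq_zero, sq, eq_comm] using hr⟩

theorem exists_mul_sq_add_mul_sq_eq_one_of_residue (h2 : IsUnit (2 : O)) {α β : O}
    (hα : IsUnit α) {a b : ResidueField O} (ha : a ≠ 0)
    (hab : residue O α * a ^ 2 + residue O β * b ^ 2 = 1) :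
    ∃ s t : O, α * s ^ 2 + β * t ^ 2 = 1 := by
  obtain ⟨t, rfl⟩ := residue_surjective b
  obtain ⟨α', hα'⟩ := hα.exists_right_inv
  have hu : residue O (α' * (1 - β * t ^ 2)) = a ^ 2 := by
    have : residue O α * residue O α' = 1 := by rw [← map_mul, hα', map_one]
    simp only [map_mul, map_sub, map_one, map_pow]
    linear_combination a ^ 2 * this - residue O α' * hab
  obtain ⟨s, hs⟩ := isSquare_of_isSquare_residue h2
    (isUnit_of_map_unit (residue O) _ (hu ▸ isUnit_iff_ne_zero.2 (pow_ne_zero 2 ha)))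
    ⟨a, hu.trans (sq a)⟩
  exact ⟨s, t, by linear_combination α * hs.symm + (1 - β * t ^ 2) * hα'⟩

theorem exists_mul_sq_add_mul_sq_eq_one [Finite (ResidueField O)] (h2 : IsUnit (2 : O))
    {α β : O} (hα : IsUnit α) (hβ : IsUnit β) :
    ∃ s t : O, α * s ^ 2 + β * t ^ 2 = 1 := by
  have := Fintype.ofFinite (ResidueField O)
  have hchar : ringChar (ResidueField O) ≠ 2 := fun hc ↦ by
    have := ringChar.of_eq hc
    exact (h2.map (residue O)).ne_zero (by rw [map_ofNat]; exact CharTwo.two_eq_zero)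
  obtain ⟨a, b, hab⟩ := FiniteField.exists_root_sum_quadratic
    (f := C (residue O α) * X ^ 2) (g := C (residue O β) * X ^ 2 - 1)
    (by compute_degree!) (by compute_degree!) (FiniteField.odd_card_of_char_ne_two hchar)
  replace hab : residue O α * a ^ 2 + residue O β * b ^ 2 = 1 := by
    simp only [eval_sub, eval_mul, eval_C, eval_pow, eval_X, eval_one] at hab
    linear_combination hab
  by_cases ha : a = 0
  · have hb : b ≠ 0 := by rintro rfl; simp [ha] at hab
    obtain ⟨t, s, h⟩ := exists_mul_sq_add_mul_sq_eq_one_of_residue (β := α) (b := a) h2 hβ hb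
      (by linear_combination hab)
    exact ⟨s, t, by linear_combination h⟩
  · exact exists_mul_sq_add_mul_sq_eq_one_of_residue h2 hα ha hab

end Hensel

namespace Matrix

open scoped Kronecker

theorem adjugate_apply_mem {n K : Type*} [Fintype n] [DecidableEq n] [CommRing K]
    (R : Subring K) {P : Matrix n n K} (hP : ∀ a b, P a b ∈ R) (a b : n) :
    P.adjugate a b ∈ R := by
  let P₀ : Matrix n n R := of fun a b ↦ ⟨P a b, hP a b⟩
  have hP₀ : R.subtype.mapMatrix P₀ = P := rfl
  rw [← hP₀, ← RingHom.map_adjugate]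
  exact (P₀.adjugate a b).2

theorem inv_conj_apply_mem {n K : Type*} [Fintype n] [DecidableEq n] [CommRing K]
    (R : Subring K) (u : (Matrix n n K)ˣ)
    (hu : ∀ m : Matrix n n K, (∀ a b, m a b ∈ R) →
      ∀ a b, ((u : Matrix n n K) * m * (↑u⁻¹ : Matrix n n K)) a b ∈ R)
    {m : Matrix n n K} (hm : ∀ a b, m a b ∈ R) (a b : n) :
    ((↑u⁻¹ : Matrix n n K) * m * (u : Matrix n n K)) a b ∈ R := by
  set P := (↑u⁻¹ : Matrix n n K)ᵀ ⊗ₖ (u : Matrix n n K)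
  set Q := (u : Matrix n n K)ᵀ ⊗ₖ (↑u⁻¹ : Matrix n n K)
  have hP : ∀ p q, P p q ∈ R := fun p q ↦ by
    have h := kronecker_mulVec_vec (u : Matrix n n K) (single q.2 q.1 1) (↑u⁻¹ : Matrix n n K)ᵀ
    rw [transpose_transpose, vec_single, mulVec_single_one] at h
    rw [← col_apply P q p, h]
    refine hu _ (fun c d ↦ ?_) _ _
    rw [single_apply]
    split_ifs <;> simp
  have hdet : P.det = 1 := by
    rw [det_kronecker, det_transpose, ← mul_pow, ← det_mul, Units.inv_mul, det_one, one_pow]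
  have hQ : Q = P.adjugate := calc
    Q = Q * (P * P.adjugate) := by rw [mul_adjugate, hdet, one_smul, mul_one]
    _ = P.adjugate := by
      rw [← mul_assoc, ← mul_kronecker_mul, ← transpose_mul, Units.inv_mul, transpose_one,
        one_kronecker_one, one_mul]
  have h := kronecker_mulVec_vec (↑u⁻¹ : Matrix n n K) m (u : Matrix n n K)ᵀ
  rw [transpose_transpose] at h
  change vec _ (b, a) ∈ R
  rw [← h]
  change (Q *ᵥ vec m) (b, a) ∈ R
  rw [hQ]
  exact Subring.sum_mem _ fun q _ ↦ R.mul_mem (adjugate_apply_mem R hP _ _) (hm _ _)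

theorem mul_transpose_of_two {K : Type*} [CommRing K] (M : Matrix (Fin 2) (Fin 2) K)
    (v₀ v₁ : Fin 2 → K) : M * (of ![v₀, v₁])ᵀ = (of ![M *ᵥ v₀, M *ᵥ v₁])ᵀ := by
  ext r s
  fin_cases s <;> rfl

theorem transpose_of_two_mul {K : Type*} [CommRing K] (v₀ v₁ : Fin 2 → K) (a b c d : K) :
    (of ![v₀, v₁])ᵀ * !![a, b; c, d] = (of ![a • v₀ + c • v₁, b • v₀ + d • v₁])ᵀ := by
  ext r s
  fin_cases s <;> simp [mul_apply, Fin.sum_univ_two, mul_comm]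

theorem isUnit_transpose_of_mulVec_eq_self_of_mulVec_eq_neg {K : Type*} [Field K]
    (h2 : (2 : K) ≠ 0) {w : Matrix (Fin 2) (Fin 2) K} {v₀ v₁ : Fin 2 → K} (h₀ : v₀ ≠ 0)
    (h₁ : v₁ ≠ 0) (hv₀ : w *ᵥ v₀ = v₀) (hv₁ : w *ᵥ v₁ = -v₁) : IsUnit (of ![v₀, v₁])ᵀ := by
  rw [isUnit_iff_isUnit_det, isUnit_iff_ne_zero, Ne, ← exists_mulVec_eq_zero_iff]
  rintro ⟨y, hy0, hy⟩
  replace hy : y 0 • v₀ + y 1 • v₁ = 0 := by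
    rwa [mulVec_transpose, vecMul_eq_sum, Fin.sum_univ_two] at hy
  have hwy := congrArg (w *ᵥ ·) hy
  simp only [mulVec_add, mulVec_smul, hv₀, hv₁, mulVec_zero] at hwy
  have hy₀ : y 0 = 0 := by
    have : (2 * y 0) • v₀ = 0 := by linear_combination (norm := module) hy + hwy
    exact (mul_eq_zero.1 ((smul_eq_zero.1 this).resolve_right h₀)).resolve_left h2
  have hy₁ : y 1 = 0 := by
    rw [hy₀, zero_smul, zero_add, smul_eq_zero] at hy
    exact hy.resolve_right h₁
  exact hy0 (funext fun i ↦ by fin_cases i <;> assumption)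

theorem exists_isUnit_mul_eq_of_sq_eq_one_of_anticomm {K : Type*} [Field K]
    (h2 : (2 : K) ≠ 0) {w k : Matrix (Fin 2) (Fin 2) K} {c : K} (hc : c ≠ 0) (hw : w * w = 1)
    (hwk : w * k = -(k * w)) (hk : k * k = c • 1) :
    ∃ g : Matrix (Fin 2) (Fin 2) K, IsUnit g ∧ w * g = g * !![1, 0; 0, -1] ∧
      k * g = g * !![0, c; 1, 0] := by
  have hw1 : 1 + w ≠ 0 := fun h ↦ by
    have hk0 : k = 0 := by
      rw [← neg_eq_of_add_eq_zero_right h, neg_mul, mul_neg, one_mul, mul_one, neg_neg] at hwk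
      have : (2 : K) • k = 0 := by rw [two_smul]; nth_rewrite 1 [← hwk]; exact neg_add_cancel k
      exact (smul_eq_zero.1 this).resolve_left h2
    rw [hk0, mul_zero, eq_comm, smul_eq_zero] at hk
    exact hk.elim hc one_ne_zero
  obtain ⟨x, hx⟩ : ∃ x, (1 + w) *ᵥ x ≠ 0 := by
    by_contra! h
    exact hw1 (ext_iff_mulVec.2 fun x ↦ by simpa using h x)
  set v := (1 + w) *ᵥ x
  have hv : w *ᵥ v = v := by rw [mulVec_mulVec, mul_add, mul_one, hw, add_comm]
  have hkv : w *ᵥ (k *ᵥ v) = -(k *ᵥ v) := by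
    rw [mulVec_mulVec, hwk, neg_mulVec, ← mulVec_mulVec, hv]
  have hkkv : k *ᵥ (k *ᵥ v) = c • v := by rw [mulVec_mulVec, hk, smul_mulVec, one_mulVec]
  have hkv0 : k *ᵥ v ≠ 0 := fun h ↦ by
    rw [h, mulVec_zero, eq_comm, smul_eq_zero] at hkkv
    exact hkkv.elim hc hx
  refine ⟨(of ![v, k *ᵥ v])ᵀ,
    isUnit_transpose_of_mulVec_eq_self_of_mulVec_eq_neg h2 hx hkv0 hv hkv, ?_, ?_⟩
  · rw [mul_transpose_of_two, transpose_of_two_mul, hv, hkv]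
    simp
  · rw [mul_transpose_of_two, transpose_of_two_mul, hkkv]
    simp

end Matrix

theorem IsMaximalOrderM2.eq_of_subset {O K : Type*} [CommRing O] [Field K] [Algebra O K]
    {D D' : Set (Matrix (Fin 2) (Fin 2) K)} (hD : IsMaximalOrderM2 O K D)
    (hD' : IsMaximalOrderM2 O K D') (h : D ⊆ D') : D = D' := by
  obtain ⟨g, rfl⟩ := hD
  obtain ⟨g', rfl⟩ := hD'
  refine h.antisymm fun m hm a b ↦ ?_
  have key := Matrix.inv_conj_apply_mem (algebraMap O K).range (g'⁻¹ * g) (fun n hn ↦ ?_) hm a b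
  · simp only [mul_inv_rev, inv_inv, Units.val_mul, mul_assoc, Units.mul_inv_cancel_left] at key ⊢
    exact key
  · have hgn := @h ((g : Matrix (Fin 2) (Fin 2) K) * n * (↑g⁻¹ : Matrix (Fin 2) (Fin 2) K))
      fun c d ↦ by
        simp only [mul_assoc, Units.inv_mul_cancel_left, Units.inv_mul, mul_one]
        exact hn c d
    simp only [Set.mem_ofPred_eq, Units.val_mul, mul_inv_rev, inv_inv, mul_assoc] at hgn ⊢
    exact hgn

section Quaternion

variable {R A : Type*} [CommRing R] [Ring A] [Algebra R A] {i j : A} {a b : R}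

theorem smul_add_smul_mul_self (hi : i * i = a • 1) (hj : j * j = b • 1)
    (hij : i * j = -(j * i)) (s t : R) :
    (s • i + t • j) * (s • i + t • j) = (a * s ^ 2 + b * t ^ 2) • 1 := by
  simp only [add_mul, mul_add, smul_mul_assoc, mul_smul_comm, hi, hj, hij]
  module

theorem smul_add_smul_mul_mul (hi : i * i = a • 1) (hj : j * j = b • 1)
    (hij : i * j = -(j * i)) (s t : R) :
    (s • i + t • j) * (i * j) = (s * a) • j - (t * b) • i := by
  have h1 : i * (i * j) = a • j := by rw [← mul_assoc, hi, smul_one_mul]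
  have h2 : j * (i * j) = -(b • i) := by rw [hij, mul_neg, ← mul_assoc, hj, smul_one_mul]
  simp only [add_mul, smul_mul_assoc, h1, h2]
  module

theorem mul_mul_smul_add_smul (hi : i * i = a • 1) (hj : j * j = b • 1)
    (hij : i * j = -(j * i)) (s t : R) :
    (i * j) * (s • i + t • j) = (t * b) • i - (s * a) • j := by
  have h1 : (i * j) * i = -(a • j) := by rw [hij, neg_mul, mul_assoc, hi, mul_smul_one]
  have h2 : (i * j) * j = b • i := by rw [mul_assoc, hj, mul_smul_one]
  simp only [mul_add, mul_smul_comm, h1, h2]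
  module

theorem mul_mul_self_of_anticomm (hi : i * i = a • 1) (hj : j * j = b • 1)
    (hij : i * j = -(j * i)) : (i * j) * (i * j) = (-(a * b)) • 1 := by
  rw [mul_assoc, ← mul_assoc j, ← neg_neg (j * i), ← hij, neg_mul, mul_neg, ← mul_assoc,
    ← mul_assoc, hi, smul_one_mul, smul_mul_assoc, hj, smul_smul, neg_smul]

end Quaternion

/-- The matrix of `x + y i + z j + u ij` in the basis `(v, ij v)`, where `v` is fixed by
`s i + t j` and `i² = a`, `j² = b`, `a s² + b t² = 1`. -/
def quaternionMatrix {R : Type*} [CommRing R] (a b s t x y z u : R) :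
    Matrix (Fin 2) (Fin 2) R :=
  !![x + a * s * y + b * t * z, a * b * (t * y - s * z - u);
    t * y - s * z + u, x - a * s * y - b * t * z]

theorem RingHom.mapMatrix_quaternionMatrix {R S : Type*} [CommRing R] [CommRing S] (f : R →+* S)
    (a b s t x y z u : R) :
    f.mapMatrix (quaternionMatrix a b s t x y z u) =
      quaternionMatrix (f a) (f b) (f s) (f t) (f x) (f y) (f z) (f u) := by
  ext r c
  fin_cases r <;> fin_cases c <;> simp [quaternionMatrix]

theorem exists_quaternionMatrix_eq {R : Type*} [CommRing R] (h2 : IsUnit (2 : R)) {a b s t : R}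
    (hab : IsUnit (a * b)) (hst : a * s ^ 2 + b * t ^ 2 = 1) (N : Matrix (Fin 2) (Fin 2) R) :
    ∃ x y z u, quaternionMatrix a b s t x y z u = N := by
  obtain ⟨h, hh⟩ := h2.exists_right_inv
  obtain ⟨γ, hγ⟩ := hab.exists_right_inv
  obtain ⟨P, hP⟩ : ∃ P, P = h * (N 0 0 - N 1 1) := ⟨_, rfl⟩
  obtain ⟨Q, hQ⟩ : ∃ Q, Q = h * (N 1 0 + γ * N 0 1) := ⟨_, rfl⟩
  refine ⟨h * (N 0 0 + N 1 1), s * P + t * b * Q, t * P - s * a * Q, h * (N 1 0 - γ * N 0 1), ?_⟩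
  ext r c
  fin_cases r <;> fin_cases c <;> simp [quaternionMatrix]
  · linear_combination N 0 0 * hh + hP + P * hst
  · linear_combination a * b * hQ + a * b * γ * N 0 1 * hh + N 0 1 * hγ + a * b * Q * hst
  · linear_combination hQ + N 1 0 * hh + Q * hst
  · linear_combination N 1 1 * hh - hP - P * hst

theorem exists_conj_eq_quaternionMatrix {K : Type*} [Field K] (h2 : (2 : K) ≠ 0)
    {i j : Matrix (Fin 2) (Fin 2) K} {a b s t : K} (ha : a ≠ 0) (hb : b ≠ 0)
    (hi : i * i = a • 1) (hj : j * j = b • 1) (hij : i * j = -(j * i))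
    (hst : a * s ^ 2 + b * t ^ 2 = 1) :
    ∃ g : GL (Fin 2) K, ∀ x y z u : K,
      (↑g⁻¹ : Matrix (Fin 2) (Fin 2) K) * (x • 1 + y • i + z • j + u • (i * j)) *
        (g : Matrix (Fin 2) (Fin 2) K) = quaternionMatrix a b s t x y z u := by
  have hw := smul_add_smul_mul_self hi hj hij s t
  have hwk := smul_add_smul_mul_mul hi hj hij s t
  have hkw := mul_mul_smul_add_smul hi hj hij s t
  rw [hst, one_smul] at hw
  obtain ⟨_, ⟨g, rfl⟩, hwg, hkg⟩ := Matrix.exists_isUnit_mul_eq_of_sq_eq_one_of_anticomm h2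
    (neg_ne_zero.2 (mul_ne_zero ha hb)) hw (by rw [hwk, hkw, neg_sub])
    (mul_mul_self_of_anticomm hi hj hij)
  set D : Matrix (Fin 2) (Fin 2) K := !![1, 0; 0, -1]
  set J : Matrix (Fin 2) (Fin 2) K := !![0, -(a * b); 1, 0]
  have hwkg : (s • i + t • j) * (i * j) * g = g * (D * J) := by
    rw [mul_assoc, hkg, ← mul_assoc, hwg, mul_assoc]
  have hig : i * g = g * ((a * s) • D - t • (D * J)) := by
    have hi' : i = (a * s) • (s • i + t • j) - t • ((s • i + t • j) * (i * j)) := by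
      rw [hwk]; linear_combination (norm := module) -hst • i
    rw [hi', sub_mul, smul_mul_assoc, smul_mul_assoc, hwg, hwkg, mul_sub, mul_smul_comm,
      mul_smul_comm]
  have hjg : j * g = g * ((b * t) • D + s • (D * J)) := by
    have hj' : j = (b * t) • (s • i + t • j) + s • ((s • i + t • j) * (i * j)) := by
      rw [hwk]; linear_combination (norm := module) -hst • j
    rw [hj', add_mul, smul_mul_assoc, smul_mul_assoc, hwg, hwkg, mul_add, mul_smul_comm,
      mul_smul_comm]
  refine ⟨g, fun x y z u ↦ ?_⟩
  rw [mul_assoc, Units.inv_mul_eq_iff_eq_mul]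
  have hmg : (x • 1 + y • i + z • j + u • (i * j)) * g = g * (x • 1 +
      y • ((a * s) • D - t • (D * J)) + z • ((b * t) • D + s • (D * J)) + u • J) := by
    simp only [add_mul, mul_add, smul_mul_assoc, mul_smul_comm, one_mul, mul_one, hig, hjg, hkg]
  rw [hmg]
  congr 1
  ext r c
  fin_cases r <;> fin_cases c <;> simp [D, J, quaternionMatrix] <;> ring

def quaternionOrder (O : Type*) {K : Type*} [CommRing O] [Field K] [Algebra O K]
    (i j : Matrix (Fin 2) (Fin 2) K) : Set (Matrix (Fin 2) (Fin 2) K) :=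
  {x | ∃ a b c d : O, x = algebraMap O K a • (1 : Matrix (Fin 2) (Fin 2) K) +
    algebraMap O K b • i + algebraMap O K c • j + algebraMap O K d • (i * j)}

theorem isMaximalOrderM2_quaternionOrder {O K : Type*} [CommRing O] [IsLocalRing O]
    [HenselianRing O (maximalIdeal O)] [Finite (ResidueField O)] [Field K] [Algebra O K]
    (h2 : IsUnit (2 : O)) {i j : Matrix (Fin 2) (Fin 2) K} {α β : O} (hα : IsUnit α)
    (hβ : IsUnit β) (hanti : i * j = -(j * i))
    (hi2 : i * i = algebraMap O K α • (1 : Matrix (Fin 2) (Fin 2) K))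
    (hj2 : j * j = algebraMap O K β • (1 : Matrix (Fin 2) (Fin 2) K)) :
    IsMaximalOrderM2 O K (quaternionOrder O i j) := by
  obtain ⟨s, t, hst⟩ := exists_mul_sq_add_mul_sq_eq_one h2 hα hβ
  obtain ⟨g, hg⟩ := exists_conj_eq_quaternionMatrix
    (by simpa [map_ofNat] using (h2.map (algebraMap O K)).ne_zero) (hα.map _).ne_zero
    (hβ.map _).ne_zero hi2 hj2 hanti (by simpa using congrArg (algebraMap O K) hst)
  replace hg (x y z u : O) := (hg _ _ _ _).trans (RingHom.mapMatrix_quaternionMatrix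
    (algebraMap O K) α β s t x y z u).symm
  refine ⟨g, Set.ext fun m ↦ ⟨?_, fun hm ↦ ?_⟩⟩
  · rintro ⟨x, y, z, u, rfl⟩ r c
    rw [hg]
    exact ⟨_, rfl⟩
  · choose N hN using hm
    obtain ⟨x, y, z, u, hN'⟩ := exists_quaternionMatrix_eq h2 (hα.mul hβ) hst (.of N)
    refine ⟨x, y, z, u, (Units.mul_right_inj g⁻¹).1 ((Units.mul_left_inj g).1 ?_)⟩
    rw [hg, hN']
    ext r c
    exact (hN r c).symm

theorem stmt_17_general (O : Type*) [CommRing O] [IsDomain O] [IsDiscreteValuationRing O]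
    [IsAdicComplete (IsLocalRing.maximalIdeal O) O] [Finite (IsLocalRing.ResidueField O)]
    (K : Type*) [Field K] [Algebra O K]
    (h2 : IsUnit (2 : O))
    (i j : Matrix (Fin 2) (Fin 2) K)
    (α β : O) (hα : IsUnit α) (hβ : IsUnit β)
    (hanti : i * j = -(j * i))
    (hi2 : i * i = algebraMap O K α • (1 : Matrix (Fin 2) (Fin 2) K))
    (hj2 : j * j = algebraMap O K β • (1 : Matrix (Fin 2) (Fin 2) K)) :
    IsMaximalOrderM2 O K
      {x | ∃ a b c d : O, x = algebraMap O K a • (1 : Matrix (Fin 2) (Fin 2) K) +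
        algebraMap O K b • i + algebraMap O K c • j + algebraMap O K d • (i * j)} ∧
    ∀ D : Set (Matrix (Fin 2) (Fin 2) K), IsMaximalOrderM2 O K D →
      {x | ∃ a b c d : O, x = algebraMap O K a • (1 : Matrix (Fin 2) (Fin 2) K) +
        algebraMap O K b • i + algebraMap O K c • j + algebraMap O K d • (i * j)} ⊆ D →
      D = {x | ∃ a b c d : O, x = algebraMap O K a • (1 : Matrix (Fin 2) (Fin 2) K) +
        algebraMap O K b • i + algebraMap O K c • j + algebraMap O K d • (i * j)} := by
  have h := isMaximalOrderM2_quaternionOrder h2 hα hβ hanti hi2 hj2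
  exact ⟨h, fun D hD hsub ↦ (h.eq_of_subset hD hsub).symm⟩

/-- Over a non-dyadic local field, for anticommuting `i, j ∈ M₂(k)` with unit squares,
the order `O[i,j] = O + Oi + Oj + Oij` is itself a maximal order, and is the unique
maximal order containing it. -/
theorem stmt_17 (O : Type*) [CommRing O] [IsDomain O] [IsDiscreteValuationRing O]
    [IsAdicComplete (IsLocalRing.maximalIdeal O) O] [Finite (IsLocalRing.ResidueField O)]
    (K : Type*) [Field K] [Algebra O K] [IsFractionRing O K]
    (h2 : IsUnit (2 : O))
    (i j : Matrix (Fin 2) (Fin 2) K)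
    (α β : O) (hα : IsUnit α) (hβ : IsUnit β)
    (hanti : i * j = -(j * i))
    (hi2 : i * i = algebraMap O K α • (1 : Matrix (Fin 2) (Fin 2) K))
    (hj2 : j * j = algebraMap O K β • (1 : Matrix (Fin 2) (Fin 2) K)) :
    IsMaximalOrderM2 O K
      {x | ∃ a b c d : O, x = algebraMap O K a • (1 : Matrix (Fin 2) (Fin 2) K) +
        algebraMap O K b • i + algebraMap O K c • j + algebraMap O K d • (i * j)} ∧
    ∀ D : Set (Matrix (Fin 2) (Fin 2) K), IsMaximalOrderM2 O K D →
      {x | ∃ a b c d : O, x = algebraMap O K a • (1 : Matrix (Fin 2) (Fin 2) K) +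
        algebraMap O K b • i + algebraMap O K c • j + algebraMap O K d • (i * j)} ⊆ D →
      D = {x | ∃ a b c d : O, x = algebraMap O K a • (1 : Matrix (Fin 2) (Fin 2) K) +
        algebraMap O K b • i + algebraMap O K c • j + algebraMap O K d • (i * j)} :=
  stmt_17_general O K h2 i j α β hα hβ hanti hi2 hj2
end

section
/- Let K = ℚ₂(√−1) with ring of integers O and uniformizer π = 1 + √−1. Then the quadratic defect of the unit u = 3 + 2√−1 equals (π)³. -/
/-!
An integer `x` of `K` is `a + b i` with `a, b ∈ ℤ₂`: its trace `2a` and norm `a² + b²` lie in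
`ℤ₂`, and a sum of two squares divisible by `4` forces `2a` and `2b` to be even. Writing
`u - x² = c + d i` with `c = 3 - a² + b²`, `d = 2 - 2ab`, we get `u - x² ∣ π³ = -2 + 2i` because
`c² + d²` divides both coordinates `2(d - c)`, `2(c + d)` of `π³ (c - d i)`, which is a congruence
modulo `16`. Conversely `u - 1 = -i π³`.
-/

open Polynomial

namespace PadicInt

variable {p : ℕ} [Fact p.Prime]

@[simp, norm_cast]
theorem coe_ofNat (n : ℕ) [n.AtLeastTwo] : ((ofNat(n) : ℤ_[p]) : ℚ_[p]) = ofNat(n) :=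
  rfl

theorem pow_dvd_iff_dvd_toZModPow {j n : ℕ} (hjn : j ≤ n) (x : ℤ_[p]) :
    (p : ℤ_[p]) ^ j ∣ x ↔ (p : ZMod (p ^ n)) ^ j ∣ toZModPow n x := by
  refine ⟨fun h => by simpa using map_dvd (toZModPow n) h, ?_⟩
  rintro ⟨r, hr⟩
  obtain ⟨ρ, rfl⟩ := ZMod.ringHom_surjective (toZModPow n) r
  have hker : (p : ℤ_[p]) ^ n ∣ x - p ^ j * ρ := by
    rw [← Ideal.mem_span_singleton, ← ker_toZModPow, RingHom.mem_ker]
    simp [hr]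
  exact (dvd_sub_left (dvd_mul_right _ _)).mp ((pow_dvd_pow _ hjn).trans hker)

theorem dvd_of_not_pow_succ_dvd {x y : ℤ_[p]} {k : ℕ} (hx : ¬(p : ℤ_[p]) ^ (k + 1) ∣ x)
    (hy : (p : ℤ_[p]) ^ k ∣ y) : x ∣ y := by
  have hx0 : x ≠ 0 := by rintro rfl; exact hx (dvd_zero _)
  have hval : x.valuation ≤ k := by
    rw [← Ideal.mem_span_singleton, mem_span_pow_iff_le_valuation x hx0] at hx
    omega
  calc x ∣ (p : ℤ_[p]) ^ x.valuation := by
        conv_lhs => rw [unitCoeff_spec hx0]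
        exact Units.mul_left_dvd.mpr dvd_rfl
    _ ∣ p ^ k := pow_dvd_pow _ hval
    _ ∣ y := hy

theorem two_dvd_of_four_dvd_sq_add_sq {α β : ℤ_[2]} (h : 4 ∣ α ^ 2 + β ^ 2) :
    2 ∣ α ∧ 2 ∣ β := by
  have residues : ∀ α β : ZMod (2 ^ 2), 2 ^ 2 ∣ α ^ 2 + β ^ 2 → 2 ^ 1 ∣ α ∧ 2 ^ 1 ∣ β := by
    decide
  have hsum := pow_dvd_iff_dvd_toZModPow (p := 2) (j := 2) le_rfl (α ^ 2 + β ^ 2)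
  have hα := pow_dvd_iff_dvd_toZModPow (p := 2) (j := 1) (n := 2) (by norm_num) α
  have hβ := pow_dvd_iff_dvd_toZModPow (p := 2) (j := 1) (n := 2) (by norm_num) β
  simp only [Nat.cast_ofNat, pow_one, map_add, map_pow] at hsum hα hβ ⊢
  norm_num at hsum
  rw [hα, hβ]
  exact residues _ _ (hsum.mp h)

-- Here `k ≤ 3`, so all four divisibilities only depend on `a` and `b` modulo `16`.
theorem exists_two_pow_dvd_three_add_two_i (a b : ℤ_[2]) : ∃ k,
    ¬(2 : ℤ_[2]) ^ (k + 1) ∣ (3 - a ^ 2 + b ^ 2) ^ 2 + (2 - 2 * a * b) ^ 2 ∧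
    (2 : ℤ_[2]) ^ k ∣ 2 * ((2 - 2 * a * b) - (3 - a ^ 2 + b ^ 2)) ∧
    (2 : ℤ_[2]) ^ k ∣ 2 * ((3 - a ^ 2 + b ^ 2) + (2 - 2 * a * b)) := by
  have residues : ∀ α β : ZMod (2 ^ 4), ∃ k < 4,
      ¬(2 : ZMod (2 ^ 4)) ^ (k + 1) ∣ (3 - α ^ 2 + β ^ 2) ^ 2 + (2 - 2 * α * β) ^ 2 ∧
      (2 : ZMod (2 ^ 4)) ^ k ∣ 2 * ((2 - 2 * α * β) - (3 - α ^ 2 + β ^ 2)) ∧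
      (2 : ZMod (2 ^ 4)) ^ k ∣ 2 * ((3 - α ^ 2 + β ^ 2) + (2 - 2 * α * β)) := by
    decide
  obtain ⟨k, hk, h⟩ := residues (toZModPow 4 a) (toZModPow 4 b)
  refine ⟨k, ?_⟩
  have reduce := fun j (hj : j ≤ 4) => pow_dvd_iff_dvd_toZModPow (p := 2) hj
  simp only [Nat.cast_ofNat] at reduce
  rw [reduce (k + 1) (by omega), reduce k (by omega), reduce k (by omega)]
  simpa only [map_add, map_sub, map_mul, map_pow, map_ofNat] using h

end PadicInt

namespace Padic

theorem sq_ne_neg_one_two (r : ℚ_[2]) : r ^ 2 ≠ -1 := by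
  intro h
  have hr : ‖r‖ ≤ 1 := by
    have : ‖r‖ ^ 2 = 1 := by rw [← norm_pow, h, norm_neg, norm_one]
    nlinarith [norm_nonneg r]
  let z : ℤ_[2] := ⟨r, hr⟩
  have hz : z ^ 2 = -1 := Subtype.ext (by push_cast; exact h)
  have := congrArg (PadicInt.toZModPow 2) hz
  rw [map_pow, map_neg, map_one] at this
  exact (by decide : ∀ α : ZMod (2 ^ 2), α ^ 2 ≠ -1) _ this

theorem exists_padicInt_of_two_mul_of_sq_add_sq {A B : ℚ_[2]} {α w : ℤ_[2]}
    (hα : 2 * A = α) (hw : A ^ 2 + B ^ 2 = w) : ∃ a b : ℤ_[2], A = a ∧ B = b := by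
  have hβ : ‖2 * B‖ ≤ 1 := by
    have hsq : (2 * B) ^ 2 = ((4 * w - α ^ 2 : ℤ_[2]) : ℚ_[2]) := by
      push_cast; rw [← hα, ← hw]; ring
    have := PadicInt.norm_le_one (4 * w - α ^ 2)
    rw [PadicInt.norm_def, ← hsq, norm_pow] at this
    exact (pow_le_one_iff_of_nonneg (norm_nonneg _) two_ne_zero).mp this
  let β : ℤ_[2] := ⟨2 * B, hβ⟩
  have hβB : (β : ℚ_[2]) = 2 * B := rfl
  have h4 : 4 ∣ α ^ 2 + β ^ 2 :=
    ⟨w, Subtype.ext (by push_cast; rw [hβB, ← hα, ← hw]; ring)⟩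
  obtain ⟨⟨a, ha⟩, ⟨b, hb⟩⟩ := PadicInt.two_dvd_of_four_dvd_sq_add_sq h4
  refine ⟨a, b, mul_left_cancel₀ two_ne_zero ?_, mul_left_cancel₀ two_ne_zero ?_⟩
  · rw [hα, ha]; push_cast; ring
  · rw [← hβB, hb]; push_cast; ring

end Padic

theorem exists_eq_add_mul_of_adjoin_eq_top {R S : Type*} [CommRing R] [CommRing S] [Algebra R S]
    {i : S} (hi : i ^ 2 = -1) (hgen : Algebra.adjoin R {i} = ⊤) (x : S) :
    ∃ A B : R, x = algebraMap R S A + algebraMap R S B * i := by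
  have hx : x ∈ Algebra.adjoin R {i} := hgen ▸ Algebra.mem_top
  induction hx using Algebra.adjoin_induction with
  | mem y hy => exact ⟨0, 1, by simp [Set.mem_singleton_iff.mp hy]⟩
  | algebraMap r => exact ⟨r, 0, by simp⟩
  | add y z _ _ ihy ihz =>
    obtain ⟨A, B, rfl⟩ := ihy
    obtain ⟨C, D, rfl⟩ := ihz
    exact ⟨A + C, B + D, by simp only [map_add]; ring⟩
  | mul y z _ _ ihy ihz =>
    obtain ⟨A, B, rfl⟩ := ihy
    obtain ⟨C, D, rfl⟩ := ihz
    refine ⟨A * C - B * D, A * D + B * C, ?_⟩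
    simp only [map_sub, map_add, map_mul]
    linear_combination (algebraMap R S B * algebraMap R S D) * hi

theorem coeff_mem_range_of_monic_of_aeval_eq_zero {R F L : Type*} [CommRing R] [IsDomain R]
    [IsIntegrallyClosed R] [Field F] [Algebra R F] [IsFractionRing R F] [Field L] [Algebra R L]
    [Algebra F L] [IsScalarTower R F L] {x : L} (hx : IsIntegral R x) {q : F[X]} (hq : q.Monic)
    (hqx : aeval x q = 0) (hdeg : q.natDegree ≤ (minpoly F x).natDegree) (n : ℕ) :
    q.coeff n ∈ (algebraMap R F).range := by
  have hmin : q = minpoly F x :=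
    eq_of_monic_of_dvd_of_natDegree_le (minpoly.monic hx.tower_top) hq (minpoly.dvd F x hqx) hdeg
  rw [hmin, minpoly.isIntegrallyClosed_eq_field_fractions' F hx, coeff_map]
  exact ⟨_, rfl⟩

theorem add_mul_dvd_one_add_pow_three {R S : Type*} [CommRing R] [IsDomain R] [CommRing S]
    [Algebra R S] {i : S} (hi : i ^ 2 = -1) {c d : R} (hN : c ^ 2 + d ^ 2 ≠ 0)
    (hs : c ^ 2 + d ^ 2 ∣ 2 * (d - c)) (ht : c ^ 2 + d ^ 2 ∣ 2 * (c + d)) :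
    algebraMap R S c + algebraMap R S d * i ∣ (1 + i) ^ 3 := by
  obtain ⟨s, hs⟩ := hs
  obtain ⟨t, ht⟩ := ht
  have hre : c * s - d * t = -2 :=
    mul_left_cancel₀ hN (by linear_combination -c * hs + d * ht)
  have him : c * t + d * s = 2 :=
    mul_left_cancel₀ hN (by linear_combination -c * ht - d * hs)
  refine ⟨algebraMap R S s + algebraMap R S t * i, ?_⟩
  have hre' := congrArg (algebraMap R S) hre
  have him' := congrArg (algebraMap R S) him
  simp only [map_sub, map_add, map_mul, map_neg, map_ofNat] at hre' him'
  linear_combination -hre' - i * him' + (3 + i - algebraMap R S d * algebraMap R S t) * hi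

theorem three_add_two_mul_sub_sq_dvd {S : Type*} [CommRing S] [Algebra ℤ_[2] S] {i : S}
    (hi : i ^ 2 = -1) (a b : ℤ_[2]) :
    3 + 2 * i - (algebraMap ℤ_[2] S a + algebraMap ℤ_[2] S b * i) ^ 2 ∣ (1 + i) ^ 3 := by
  obtain ⟨k, hN, hs, ht⟩ := PadicInt.exists_two_pow_dvd_three_add_two_i a b
  have hN0 : (3 - a ^ 2 + b ^ 2) ^ 2 + (2 - 2 * a * b) ^ 2 ≠ 0 := by
    rintro h; exact hN (h ▸ dvd_zero _)
  have key := add_mul_dvd_one_add_pow_three hi hN0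
    (PadicInt.dvd_of_not_pow_succ_dvd (p := 2) (by simpa using hN) (by simpa using hs))
    (PadicInt.dvd_of_not_pow_succ_dvd (p := 2) (by simpa using hN) (by simpa using ht))
  convert key using 1
  simp only [map_sub, map_add, map_mul, map_pow, map_ofNat]
  linear_combination -(algebraMap ℤ_[2] S b) ^ 2 * hi

section

variable {K : Type*} [Field K] [Algebra ℚ_[2] K] {i : K}

theorem add_mul_notMem_range_of_sq_eq_neg_one (hi : i ^ 2 = -1) {A B : ℚ_[2]} (hB : B ≠ 0) :
    algebraMap ℚ_[2] K A + algebraMap ℚ_[2] K B * i ∉ (algebraMap ℚ_[2] K).range := by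
  rintro ⟨r, hr⟩
  have hB' : algebraMap ℚ_[2] K B ≠ 0 := (_root_.map_ne_zero _).mpr hB
  have hri : algebraMap ℚ_[2] K ((r - A) / B) = i := by
    rw [map_div₀, map_sub, hr]; field_simp; ring
  apply Padic.sq_ne_neg_one_two ((r - A) / B)
  apply (algebraMap ℚ_[2] K).injective
  rw [map_pow, hri, hi, map_neg, map_one]

variable [Algebra ℤ_[2] K] [IsScalarTower ℤ_[2] ℚ_[2] K]

theorem exists_padicInt_trace_norm (hi : i ^ 2 = -1) {A B : ℚ_[2]} (hB : B ≠ 0)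
    (hx : IsIntegral ℤ_[2] (algebraMap ℚ_[2] K A + algebraMap ℚ_[2] K B * i)) :
    ∃ α w : ℤ_[2], 2 * A = α ∧ A ^ 2 + B ^ 2 = w := by
  set q : ℚ_[2][X] := X ^ 2 - C (2 * A) * X + C (A ^ 2 + B ^ 2) with hq
  have hmonic : q.Monic := by rw [hq]; monicity!
  have hdeg : q.natDegree = 2 := by rw [hq]; compute_degree!
  have hroot : aeval (algebraMap ℚ_[2] K A + algebraMap ℚ_[2] K B * i) q = 0 := by
    simp only [hq, map_add, map_sub, map_mul, map_pow, map_ofNat, aeval_X, aeval_C]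
    linear_combination (algebraMap ℚ_[2] K B) ^ 2 * hi
  have hmin : q.natDegree ≤
      (minpoly ℚ_[2] (algebraMap ℚ_[2] K A + algebraMap ℚ_[2] K B * i)).natDegree := by
    rw [hdeg]
    exact (minpoly.two_le_natDegree_iff hx.tower_top).mpr
      (add_mul_notMem_range_of_sq_eq_neg_one hi hB)
  obtain ⟨α, hα⟩ := coeff_mem_range_of_monic_of_aeval_eq_zero hx hmonic hroot hmin 1
  obtain ⟨w, hw⟩ := coeff_mem_range_of_monic_of_aeval_eq_zero hx hmonic hroot hmin 0
  refine ⟨-α, w, ?_, ?_⟩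
  · have hq₁ : q.coeff 1 = -(2 * A) := by
      simp only [hq, coeff_add, coeff_sub, coeff_X_pow, coeff_C_mul, coeff_X_one, coeff_C]
      norm_num
    rw [PadicInt.algebraMap_apply, hq₁] at hα
    rw [PadicInt.coe_neg, hα, neg_neg]
  · have hq₀ : q.coeff 0 = A ^ 2 + B ^ 2 := by
      simp only [hq, coeff_add, coeff_sub, coeff_X_pow, coeff_C_mul, coeff_X_zero, coeff_C]
      norm_num
    rw [PadicInt.algebraMap_apply, hq₀] at hw
    exact hw.symm

theorem exists_padicInt_coords (hi : i ^ 2 = -1) (hgen : Algebra.adjoin ℚ_[2] {i} = ⊤) {x : K}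
    (hx : IsIntegral ℤ_[2] x) :
    ∃ a b : ℤ_[2], x = algebraMap ℤ_[2] K a + algebraMap ℤ_[2] K b * i := by
  obtain ⟨A, B, rfl⟩ := exists_eq_add_mul_of_adjoin_eq_top hi hgen x
  by_cases hB : B = 0
  · subst hB
    rw [map_zero, zero_mul, add_zero,
      isIntegral_algebraMap_iff (algebraMap ℚ_[2] K).injective] at hx
    obtain ⟨a, rfl⟩ := IsIntegrallyClosed.isIntegral_iff.mp hx
    exact ⟨a, 0, by simp [IsScalarTower.algebraMap_apply ℤ_[2] ℚ_[2] K]⟩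
  obtain ⟨α, w, hα, hw⟩ := exists_padicInt_trace_norm hi hB hx
  obtain ⟨a, b, rfl, rfl⟩ := Padic.exists_padicInt_of_two_mul_of_sq_add_sq hα hw
  exact ⟨a, b, by simp only [IsScalarTower.algebraMap_apply ℤ_[2] ℚ_[2] K]; rfl⟩
end

/-- In `K = ℚ₂(√−1)` with uniformizer `π = 1 + √−1`, the quadratic defect of the unit
`u = 3 + 2√−1` equals `(π)³`, the defect being computed in the ring of integers
(the integral closure of `ℤ₂` in `K`). -/
theorem stmt_18 (K : Type*) [Field K] [Algebra ℚ_[2] K]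
    [Algebra ℤ_[2] K] [IsScalarTower ℤ_[2] ℚ_[2] K]
    (i : K) (hi : i ^ 2 = -1) (hgen : Algebra.adjoin ℚ_[2] {i} = ⊤)
    (πO uO : integralClosure ℤ_[2] K)
    (hπ : (πO : K) = 1 + i) (hu : (uO : K) = 3 + 2 * i) :
    (⨅ x : integralClosure ℤ_[2] K, Ideal.span {uO - x ^ 2}) = Ideal.span {πO ^ 3} := by
  let iO : integralClosure ℤ_[2] K := ⟨i, X ^ 2 + 1, by monicity!, by simp [hi]⟩
  have hiO : iO ^ 2 = -1 := Subtype.ext (by simpa [iO] using hi)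
  have hπO : πO = 1 + iO := Subtype.ext (by simpa [iO] using hπ)
  have huO : uO = 3 + 2 * iO := Subtype.ext (by rw [hu]; rfl)
  rw [hπO, huO]
  refine le_antisymm (iInf_le_of_le 1 ?_) (le_iInf fun x => ?_) <;>
    rw [Ideal.span_singleton_le_span_singleton]
  · exact ⟨-iO, by linear_combination (iO ^ 2 + 3 * iO + 2) * hiO⟩
  · obtain ⟨a, b, hx⟩ := exists_padicInt_coords hi hgen x.2
    have hxO : x = algebraMap ℤ_[2] _ a + algebraMap ℤ_[2] _ b * iO := Subtype.ext hx
    rw [hxO]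
    exact three_add_two_mul_sub_sq_dvd hiO a b
end
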